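/- arXiv:1306.4519 — 11 statements merged into one kernel-verified Lean document; each statement's English description precedes it below -/
import Mathlib

section
/- Let n ≥ 3 and let p_1, …, p_n be real numbers. For x ∈ {0,1}^n and i ∈ {1,…,n}, define g_i(x) = p_m where m = #{ j ∈ {1,…,n} : x_j = x_i }, and let x^(i) denote x with its i-th coordinate flipped. Then the following are equivalent: (I1) for every i ∈ {1,…,n} there exists x ∈ {0,1}^n with g_i(x) ≠ g_i(x^(i)); (I2) for every i, j ∈ {1,…,n} there exists x ∈ {0,1}^n with g_j(x) ≠ g_j(x^(i)); (iii) there exists s ∈ {1,…,n} with p_s ≠ p_{n−s+1}. -/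
open Finset

/-- `g n p x i` is the conditional probability of effect `E i` given that the
causes take the values `x` in the fully symmetric (GST) model: it equals `p m`
where `m` is the number of indices `j` with `x j = x i`.  Here `p` is indexed
so that `p 1, …, p n` are the model probabilities `p_1, …, p_n`. -/
noncomputable def g (n : ℕ) (p : ℕ → ℝ) (x : Fin n → Bool) (i : Fin n) : ℝ :=
  p (Finset.univ.filter (fun j => x j = x i)).card

/-- `flipAt n x i` is `x` with its `i`-th coordinate flipped. -/
def flipAt (n : ℕ) (x : Fin n → Bool) (i : Fin n) : Fin n → Bool :=
  Function.update x i (!(x i))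

private lemma card_filter_comp {n : ℕ} (σ : Equiv.Perm (Fin n)) (P : Fin n → Prop)
    [DecidablePred P] :
    (univ.filter fun k => P (σ k)).card = (univ.filter P).card := by
  apply Finset.card_bij' (fun a _ => σ a) (fun a _ => σ.symm a) <;> simp

private lemma card_filter_lt {n m : ℕ} (hm : m ≤ n) :
    (univ.filter fun k : Fin n => k.val < m).card = m := by
  have h : ∀ a ∈ Finset.range m, a < n := fun a ha => lt_of_lt_of_le (mem_range.1 ha) hm
  have e : (univ.filter fun k : Fin n => k.val < m) = (Finset.range m).attachFin h := by
    ext a; simp [Finset.mem_attachFin]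
  rw [e, Finset.card_attachFin, Finset.card_range]

private lemma exists_x_one {n : ℕ} (hn : 0 < n) (i : Fin n) (m : ℕ) (h1 : 1 ≤ m) (h2 : m ≤ n) :
    ∃ x : Fin n → Bool, x i = true ∧ (univ.filter fun k => x k = true).card = m := by
  set σ := Equiv.swap i (⟨0, hn⟩ : Fin n) with hσ
  refine ⟨fun k => decide ((σ k).val < m), ?_, ?_⟩
  · simp [hσ, Equiv.swap_apply_left]; omega
  · have e : (univ.filter fun k => (decide ((σ k).val < m)) = true)
        = (univ.filter fun k => (σ k).val < m) := by
      apply Finset.filter_congr; intro k _; simp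
    rw [e]
    exact (card_filter_comp σ (fun v => v.val < m)).trans (card_filter_lt h2)

private lemma exists_x_two {n : ℕ} (i j : Fin n) (hij : i ≠ j) (hn : 2 ≤ n) (m : ℕ)
    (h1 : 1 ≤ m) (h2 : m ≤ n - 1) :
    ∃ x : Fin n → Bool, x j = true ∧ x i = false ∧
      (univ.filter fun k => x k = true).card = m := by
  have hn0 : 0 < n := by omega
  set τ := Equiv.swap j (⟨0, hn0⟩ : Fin n) with hτ
  set ρ := Equiv.swap (τ i) (⟨n - 1, by omega⟩ : Fin n) with hρ
  set σ := τ.trans ρ with hσ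
  have hτi : τ i ≠ ⟨0, hn0⟩ := by
    intro h
    have : τ i = τ j := by rw [h, hτ, Equiv.swap_apply_left]
    exact hij (τ.injective this)
  have hσj : σ j = ⟨0, hn0⟩ := by
    simp only [hσ, Equiv.trans_apply, hτ, Equiv.swap_apply_left]
    rw [hρ, Equiv.swap_apply_of_ne_of_ne (Ne.symm hτi) (by
      intro h
      have : n - 1 = 0 := by simpa using congrArg Fin.val h.symm
      omega)]
  have hσi : σ i = ⟨n - 1, by omega⟩ := by
    simp only [hσ, Equiv.trans_apply, hρ, Equiv.swap_apply_left]
  refine ⟨fun k => decide ((σ k).val < m), ?_, ?_, ?_⟩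
  · show decide ((σ j).val < m) = true
    rw [hσj]; simp; omega
  · show decide ((σ i).val < m) = false
    rw [hσi]; simp; omega
  · have e : (univ.filter fun k => (decide ((σ k).val < m)) = true)
        = (univ.filter fun k => (σ k).val < m) := by
      apply Finset.filter_congr; intro k _; simp
    rw [e]
    exact (card_filter_comp σ (fun v => v.val < m)).trans (card_filter_lt (by omega))

private lemma exists_consec {n : ℕ} (p : ℕ → ℝ) (s : ℕ) (h1 : 1 ≤ s) (h2 : s ≤ n)
    (hps : p s ≠ p (n - s + 1)) : ∃ m, 1 ≤ m ∧ m < n ∧ p m ≠ p (m + 1) := by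
  by_contra hc
  push_neg at hc
  have key : ∀ k, 1 ≤ k → k ≤ n → p k = p 1 := by
    intro k
    induction k with
    | zero => omega
    | succ k ih =>
      intro _ hk
      by_cases hk0 : k = 0
      · simp [hk0]
      · rw [← hc k (by omega) (by omega)]
        exact ih (by omega) (by omega)
  exact hps (by rw [key s h1 h2, key (n - s + 1) (by omega) (by omega)])
private lemma cnt_update {n : ℕ} (x : Fin n → Bool) (i : Fin n) (b' b : Bool) :
    (univ.filter fun j => Function.update x i b' j = b).card + (if x i = b then 1 else 0)
      = (univ.filter fun j => x j = b).card + (if b' = b then 1 else 0) := by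
  classical
  rw [Finset.card_filter, Finset.card_filter,
      ← Finset.sum_erase_add univ _ (mem_univ i),
      ← Finset.sum_erase_add univ _ (mem_univ i)]
  simp only [Function.update_self]
  rw [Finset.sum_congr rfl (fun j hj => by
    rw [Function.update_of_ne (Finset.mem_erase.1 hj).1])]
  omega

private lemma cnt_add {n : ℕ} (x : Fin n → Bool) (b : Bool) :
    (univ.filter fun j => x j = b).card + (univ.filter fun j => x j = !b).card = n := by
  classical
  have h := Finset.card_filter_add_card_filter_not (s := univ) (p := fun j : Fin n => x j = b)
  simp only [Finset.card_univ, Fintype.card_fin] at h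
  have e : (univ.filter fun j : Fin n => ¬ x j = b) = (univ.filter fun j => x j = !b) := by
    apply Finset.filter_congr
    intro j _; cases hb : x j <;> cases b <;> simp
  rw [← e]
  convert h using 2

private lemma g_flip_self {n : ℕ} (p : ℕ → ℝ) (x : Fin n → Bool) (i : Fin n) :
    g n p (flipAt n x i) i
      = p (n - (univ.filter fun j => x j = x i).card + 1) := by
  have h1 := cnt_update x i (!x i) (!x i)
  have h2 := cnt_add x (x i)
  simp only [Bool.eq_not_self, if_false, if_true, Bool.not_eq_self] at h1
  have hle : (univ.filter fun j => x j = x i).card ≤ n := by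
    have := Finset.card_filter_le univ (fun j : Fin n => x j = x i)
    simpa using this
  show p _ = p _
  congr 1
  simp only [flipAt, Function.update_self]
  omega

private lemma g_flip_other {n : ℕ} (p : ℕ → ℝ) (x : Fin n → Bool) (i j : Fin n) (hij : i ≠ j) :
    g n p (flipAt n x i) j
      = p ((univ.filter fun k => Function.update x i (!x i) k = x j).card) := by
  show p _ = p _
  congr 1
  simp only [flipAt, Function.update_of_ne (Ne.symm hij)]
/-- For `n ≥ 3` and real numbers `p 1, …, p n`, the following are equivalent:
(I1) every cause influences its own effect; (I2) every cause influences every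
effect; (iii) `p s ≠ p (n - s + 1)` for some `s ∈ {1,…,n}`. -/
theorem influence_characterization (n : ℕ) (hn : 3 ≤ n) (p : ℕ → ℝ) :
    ((∀ i : Fin n, ∃ x : Fin n → Bool, g n p x i ≠ g n p (flipAt n x i) i) ↔
      (∀ i j : Fin n, ∃ x : Fin n → Bool, g n p x j ≠ g n p (flipAt n x i) j)) ∧
    ((∀ i : Fin n, ∃ x : Fin n → Bool, g n p x i ≠ g n p (flipAt n x i) i) ↔
      (∃ s : ℕ, 1 ≤ s ∧ s ≤ n ∧ p s ≠ p (n - s + 1))) := by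
  have hn0 : 0 < n := by omega
  have h13 : (∀ i : Fin n, ∃ x : Fin n → Bool, g n p x i ≠ g n p (flipAt n x i) i) →
      (∃ s : ℕ, 1 ≤ s ∧ s ≤ n ∧ p s ≠ p (n - s + 1)) := by
    intro h
    obtain ⟨x, hx⟩ := h ⟨0, hn0⟩
    refine ⟨(univ.filter fun j => x j = x ⟨0, hn0⟩).card, ?_, ?_, ?_⟩
    · have hmem : (⟨0, hn0⟩ : Fin n) ∈ univ.filter fun j => x j = x ⟨0, hn0⟩ := by simp
      exact Finset.card_pos.mpr ⟨_, hmem⟩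
    · simpa using Finset.card_filter_le univ (fun j : Fin n => x j = x ⟨0, hn0⟩)
    · intro hp
      apply hx
      rw [g_flip_self]
      exact hp
  have h32 : (∃ s : ℕ, 1 ≤ s ∧ s ≤ n ∧ p s ≠ p (n - s + 1)) →
      ∀ i j : Fin n, ∃ x : Fin n → Bool, g n p x j ≠ g n p (flipAt n x i) j := by
    rintro ⟨s, hs1, hsn, hps⟩ i j
    by_cases hij : i = j
    · subst hij
      obtain ⟨x, hxi, hcard⟩ := exists_x_one hn0 i s hs1 hsn
      refine ⟨x, ?_⟩
      rw [g_flip_self]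
      have hc : (univ.filter fun k => x k = x i).card = s := by
        rw [show (univ.filter fun k => x k = x i) = (univ.filter fun k => x k = true) by
          simp only [hxi]]
        exact hcard
      show p _ ≠ p _
      rw [hc]
      exact hps
    · obtain ⟨m, hm1, hmn, hpm⟩ := exists_consec p s hs1 hsn hps
      obtain ⟨x, hxj, hxi, hcard⟩ := exists_x_two i j hij (by omega) m hm1 (by omega)
      refine ⟨x, ?_⟩
      rw [g_flip_other p x i j hij]
      show p ((univ.filter fun k => x k = x j).card) ≠
        p ((univ.filter fun k => Function.update x i (!x i) k = x j).card)
      have h1 := cnt_update x i (!x i) (x j)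
      simp only [hxi, hxj, Bool.not_false] at h1 ⊢
      simp only [hcard] at h1
      simp at h1
      rw [hcard, h1]
      exact hpm
  constructor
  · exact ⟨fun h1 => h32 (h13 h1), fun h2 i => h2 i i⟩
  · exact ⟨h13, fun h3 i => h32 h3 i i⟩
end

section
/- GST_3 is exactly the set of points p = (p_1,p_2,p_3) ∈ [0,1]^3 such that p_1 − 4p_2 + 3p_3 = 0 and p_1 ≠ p_3. -/
noncomputable def coord (n : ℕ) (p : Fin n → ℝ) (k : ℕ) : ℝ :=
  if h : 1 ≤ k ∧ k ≤ n then p ⟨k - 1, by omega⟩ else 0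

noncomputable def psi (n : ℕ) (p : Fin n → ℝ) : ℝ :=
  (((2:ℝ)^(n-1))⁻¹ * ∑ k ∈ Finset.range n, ((n-1).choose k : ℝ) * coord n p (k+1))^2
  - ((2:ℝ)^(n-1))⁻¹ * ∑ k ∈ Finset.range (n-1),
      ((n-2).choose k : ℝ) * ((coord n p (k+2))^2 + coord n p (k+1) * coord n p (n-k-1))

def Ind (n : ℕ) : Set (Fin n → ℝ) :=
  {p | (∀ i, p i ∈ Set.Icc (0:ℝ) 1) ∧ psi n p = 0}

def Infl (n : ℕ) : Set (Fin n → ℝ) :=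
  {p | (∀ i, p i ∈ Set.Icc (0:ℝ) 1) ∧ ∃ s, 1 ≤ s ∧ s ≤ n ∧ coord n p s ≠ coord n p (n - s + 1)}

def GST (n : ℕ) : Set (Fin n → ℝ) := Ind n ∩ Infl n

lemma coord3_1 (p : Fin 3 → ℝ) : coord 3 p 1 = p 0 := by simp [coord]
lemma coord3_2 (p : Fin 3 → ℝ) : coord 3 p 2 = p 1 := by simp [coord]
lemma coord3_3 (p : Fin 3 → ℝ) : coord 3 p 3 = p 2 := by simp [coord]

lemma psi3 (p : Fin 3 → ℝ) :
    psi 3 p = (p 0 - p 2) * (p 0 - 4 * p 1 + 3 * p 2) / 16 := by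
  simp [psi, Finset.sum_range_succ, coord3_1, coord3_2, coord3_3]
  ring

/-- `GST 3` is exactly the set of `p ∈ [0,1]³` with `p 1 - 4 p 2 + 3 p 3 = 0`
and `p 1 ≠ p 3`. -/
theorem gst_three_characterization :
    GST 3 = {p : Fin 3 → ℝ | (∀ i, p i ∈ Set.Icc (0:ℝ) 1) ∧
      p 0 - 4 * p 1 + 3 * p 2 = 0 ∧ p 0 ≠ p 2} := by
  ext p
  simp only [GST, Ind, Infl, Set.mem_inter_iff, Set.mem_setOf_eq, psi3]
  constructor
  · rintro ⟨⟨hb, hpsi⟩, -, s, h1, h3, hne⟩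
    have hne' : p 0 ≠ p 2 := by
      interval_cases s <;>
        simp [coord3_1, coord3_2, coord3_3] at hne <;>
        first | exact hne | exact fun h => hne h.symm
    refine ⟨hb, ?_, hne'⟩
    have := sub_ne_zero.mpr hne'
    field_simp at hpsi
    rcases mul_eq_zero.mp (hpsi.trans (mul_zero 16)) with h | h
    · exact absurd h this
    · linarith
  · rintro ⟨hb, heq, hne⟩
    exact ⟨⟨hb, by rw [heq]; ring⟩, hb, 1, le_refl 1, by norm_num,
      by simpa [coord3_1, coord3_3] using hne⟩
end

section
/- The points (1, 1/2, 1/3) and (1/3, 1/9, 1/27) both lie in GST_3. -/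
/-- The points `(1, 1/2, 1/3)` and `(1/3, 1/9, 1/27)` both lie in `GST 3`. -/
theorem special_points_in_gst_three :
    (![1, 1/2, 1/3] : Fin 3 → ℝ) ∈ GST 3 ∧ (![1/3, 1/9, 1/27] : Fin 3 → ℝ) ∈ GST 3 := by
  constructor <;>
  · refine ⟨⟨?_, ?_⟩, ?_, 1, by norm_num, by norm_num, ?_⟩
    · intro i; fin_cases i <;> norm_num
    · simp only [psi, coord, Finset.sum_range_succ, Finset.sum_range_zero]
      norm_num [Fin.isValue, Matrix.cons_val_zero, Matrix.cons_val_one]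
    · intro i; fin_cases i <;> norm_num
    · simp only [coord]
      norm_num
end

section
/- Let n ≥ 3. For every real θ, ψ((θ, θ^2, …, θ^n)) = (θ^2 / 2^{2n−2}) · f_n(θ). Moreover f_n(0) = 1 and f_n(1) = 0. -/
/-- The polynomial `f_n(θ) = (1+θ)^{2n-2} - 2^{n-1} θ² (1+θ²)^{n-2} - 2^{2n-3} θ^{n-2}`. -/
noncomputable def f (n : ℕ) (θ : ℝ) : ℝ :=
  (1 + θ)^(2*n - 2) - 2^(n-1) * θ^2 * (1 + θ^2)^(n-2) - 2^(2*n - 3) * θ^(n-2)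

/-- For `n ≥ 3`, `ψ((θ, θ², …, θⁿ)) = (θ² / 2^{2n-2}) · f_n(θ)` for every real `θ`;
moreover `f_n(0) = 1` and `f_n(1) = 0`. -/
theorem psi_geometric_point (n : ℕ) (hn : 3 ≤ n) :
    (∀ θ : ℝ, psi n (fun i : Fin n => θ^((i : ℕ) + 1)) = θ^2 / 2^(2*n - 2) * f n θ) ∧
    f n 0 = 1 ∧ f n 1 = 0 := by
  obtain ⟨m, rfl⟩ := Nat.exists_eq_add_of_le hn
  have h1 : 3 + m - 1 = m + 2 := by omega
  have h2 : 3 + m - 2 = m + 1 := by omega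
  have h3 : 2 * (3 + m) - 2 = 2 * m + 4 := by omega
  have h4 : 2 * (3 + m) - 3 = 2 * m + 3 := by omega
  refine ⟨?_, by simp [f, h2], ?_⟩
  · intro θ
    have hc : ∀ k : ℕ, 1 ≤ k → k ≤ 3 + m →
        coord (3 + m) (fun i : Fin (3+m) => θ^((i : ℕ) + 1)) k = θ ^ k := by
      intro k hk1 hk2
      rw [coord, dif_pos ⟨hk1, hk2⟩]
      simp only []
      congr 1
      omega
    have hS1 : ∑ k ∈ Finset.range (3 + m), (((3 + m - 1).choose k : ℝ)) *
        coord (3+m) (fun i : Fin (3+m) => θ^((i : ℕ) + 1)) (k+1)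
        = θ * (θ + 1) ^ (m + 2) := by
      have step : ∀ k ∈ Finset.range (3 + m), (((3 + m - 1).choose k : ℝ)) *
          coord (3+m) (fun i : Fin (3+m) => θ^((i : ℕ) + 1)) (k+1)
          = θ * (θ^k * 1^(m+2-k) * ((m + 2).choose k : ℝ)) := by
        intro k hk
        have hk' : k < 3 + m := Finset.mem_range.mp hk
        rw [hc (k+1) (by omega) (by omega), h1, one_pow, pow_succ]
        ring
      rw [Finset.sum_congr rfl step, ← Finset.mul_sum]
      congr 1
      rw [add_pow, show m + 2 + 1 = 3 + m by omega]
    have hS2 : ∑ k ∈ Finset.range (3 + m - 1), (((3 + m - 2).choose k : ℝ)) *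
        ((coord (3+m) (fun i : Fin (3+m) => θ^((i : ℕ) + 1)) (k+2))^2
         + coord (3+m) (fun i : Fin (3+m) => θ^((i : ℕ) + 1)) (k+1)
           * coord (3+m) (fun i : Fin (3+m) => θ^((i : ℕ) + 1)) (3 + m - k - 1))
        = θ^4 * (θ^2 + 1) ^ (m + 1) + 2^(m+1) * θ^(3+m) := by
      rw [h1, h2]
      have step : ∀ k ∈ Finset.range (m + 2),
          (((m + 1).choose k : ℝ)) *
          ((coord (3+m) (fun i : Fin (3+m) => θ^((i : ℕ) + 1)) (k+2))^2
           + coord (3+m) (fun i : Fin (3+m) => θ^((i : ℕ) + 1)) (k+1)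
             * coord (3+m) (fun i : Fin (3+m) => θ^((i : ℕ) + 1)) (3 + m - k - 1))
          = ((m + 1).choose k : ℝ) * ((θ^2)^k * 1^(m+1-k)) * θ^4
            + ((m + 1).choose k : ℝ) * θ^(3+m) := by
        intro k hk
        have hk' : k ≤ m + 1 := by
          have := Finset.mem_range.mp hk; omega
        rw [hc (k+2) (by omega) (by omega), hc (k+1) (by omega) (by omega),
            hc (3 + m - k - 1) (by omega) (by omega)]
        rw [← pow_add, show k + 1 + (3 + m - k - 1) = 3 + m by omega]
        ring
      rw [Finset.sum_congr rfl step, Finset.sum_add_distrib, ← Finset.sum_mul,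
          ← Finset.sum_mul]
      have hb : ∑ k ∈ Finset.range (m + 2), (((m + 1).choose k : ℝ)) * ((θ^2)^k * 1^(m+1-k))
          = (θ^2 + 1)^(m+1) := by
        rw [add_pow]
        exact Finset.sum_congr rfl fun k hk => by ring
      have hch : ∑ k ∈ Finset.range (m + 2), (((m + 1).choose k : ℝ)) = 2^(m+1) := by
        rw [← Nat.cast_sum]
        norm_cast
        exact Nat.sum_range_choose (m+1)
      rw [hb, hch]
      ring
    rw [psi, hS1, hS2, f, h1, h2, h3, h4]
    have h2ne : (2:ℝ)^(m+2) ≠ 0 := by positivity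
    have h2ne' : (2:ℝ)^(2*m+4) ≠ 0 := by positivity
    rw [show (1:ℝ) + θ = θ + 1 by ring, show (1:ℝ) + θ^2 = θ^2 + 1 by ring]
    field_simp
    ring
  · rw [f, h1, h2, h3, h4]
    norm_num
    ring
end

section
/- Let n ≥ 4 and set N = 2^{n−1}. For x ∈ [0,1], the point p = (1, 0, 0, …, 0, x) (i.e. p_1 = 1, p_i = 0 for 2 ≤ i ≤ n−1, p_n = x) lies in GST_n if and only if x = 1/(√N − 1). In particular 1/(√N − 1) ∈ (0,1), so there is exactly one such point in GST_n. -/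
lemma psi_eval (n : ℕ) (hn : 4 ≤ n) (x : ℝ) :
    psi n (fun i : Fin n => if (i : ℕ) = 0 then (1:ℝ) else if (i : ℕ) = n - 1 then x else 0)
    = (((2:ℝ)^(n-1))⁻¹ * (1 + x))^2 - ((2:ℝ)^(n-1))⁻¹ * x^2 := by
  set p : Fin n → ℝ := fun i : Fin n => if (i : ℕ) = 0 then (1:ℝ) else if (i : ℕ) = n - 1 then x else 0 with hp
  have h1 : ∑ k ∈ Finset.range n, ((n-1).choose k : ℝ) * coord n p (k+1) = 1 + x := by
    have : ∀ k ∈ Finset.range n, ((n-1).choose k : ℝ) * coord n p (k+1)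
        = (if k = 0 then (1:ℝ) else 0) + (if k = n-1 then x else 0) := by
      intro k hk
      simp only [Finset.mem_range] at hk
      have hc : coord n p (k+1) = if k = 0 then (1:ℝ) else if k = n - 1 then x else 0 := by
        rw [coord]
        rw [dif_pos ⟨by omega, by omega⟩]
        simp [hp]
      rw [hc]
      by_cases h0 : k = 0
      · simp [h0, show (0:ℕ) ≠ n - 1 by omega]
      · by_cases h1 : k = n - 1
        · simp [h0, h1, Nat.choose_self, show ¬(n-1 = 0) by omega]
        · simp [h0, h1]
    rw [Finset.sum_congr rfl this, Finset.sum_add_distrib,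
        Finset.sum_ite_eq' (Finset.range n) 0 (fun _ => (1:ℝ)),
        Finset.sum_ite_eq' (Finset.range n) (n-1) (fun _ => x)]
    simp only [Finset.mem_range]
    rw [if_pos (by omega), if_pos (by omega)]
  have h2 : ∑ k ∈ Finset.range (n-1),
      ((n-2).choose k : ℝ) * ((coord n p (k+2))^2 + coord n p (k+1) * coord n p (n-k-1)) = x^2 := by
    have : ∀ k ∈ Finset.range (n-1),
        ((n-2).choose k : ℝ) * ((coord n p (k+2))^2 + coord n p (k+1) * coord n p (n-k-1))
        = (if k = n-2 then x^2 else 0) := by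
      intro k hk
      simp only [Finset.mem_range] at hk
      have hc1 : coord n p (k+2) = if k = n - 2 then x else 0 := by
        rw [coord, dif_pos ⟨by omega, by omega⟩]
        simp only [hp]
        have : k + 2 - 1 = k + 1 := by omega
        simp [this, show k + 1 ≠ 0 by omega, show (k+1 = n-1) ↔ (k = n-2) by omega]
      have hc2 : coord n p (k+1) = if k = 0 then (1:ℝ) else 0 := by
        rw [coord, dif_pos ⟨by omega, by omega⟩]
        simp only [hp]
        simp [show (k+1-1) = k by omega, show ¬(k = n-1) by omega]
      have hc3 : coord n p (n-k-1) = if k = n - 2 then (1:ℝ) else 0 := by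
        rw [coord, dif_pos ⟨by omega, by omega⟩]
        simp only [hp]
        simp [show (n-k-1-1 = 0) ↔ (k = n-2) by omega, show ¬(n-k-1-1 = n-1) by omega]
      rw [hc1, hc2, hc3]
      by_cases h2 : k = n - 2
      · simp [h2, show ¬(n-2 = 0) by omega, Nat.choose_self]
      · simp [h2]
    rw [Finset.sum_congr rfl this, Finset.sum_ite_eq' (Finset.range (n-1)) (n-2) (fun _ => x^2)]
    simp only [Finset.mem_range]
    rw [if_pos (by omega)]
  rw [psi, h1, h2]


/-- For `n ≥ 4` and `N = 2^{n-1}`, the point `(1, 0, …, 0, x)` with `x ∈ [0,1]`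
lies in `GST n` iff `x = 1/(√N - 1)`; moreover `1/(√N - 1) ∈ (0,1)`, so there is
exactly one such point in `GST n`. -/
theorem boundary_point_in_gst (n : ℕ) (hn : 4 ≤ n) :
    (∀ x ∈ Set.Icc (0:ℝ) 1,
      (fun i : Fin n => if (i : ℕ) = 0 then (1:ℝ) else if (i : ℕ) = n - 1 then x else 0)
          ∈ GST n ↔
        x = 1 / (Real.sqrt (2^(n-1)) - 1)) ∧
    1 / (Real.sqrt ((2:ℝ)^(n-1)) - 1) ∈ Set.Ioo (0:ℝ) 1 := by
  set N : ℝ := (2:ℝ)^(n-1) with hNdef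
  have hN : (0:ℝ) < N := by positivity
  set s : ℝ := Real.sqrt N with hsdef
  have hs : s^2 = N := Real.sq_sqrt hN.le
  have hs2 : 2 < s := by
    rw [hsdef, show (2:ℝ) = Real.sqrt 4 by
      rw [show (4:ℝ) = 2^2 by norm_num, Real.sqrt_sq (by norm_num)]]
    apply Real.sqrt_lt_sqrt (by norm_num)
    calc (4:ℝ) < 2^3 := by norm_num
    _ ≤ N := by
      rw [hNdef]
      apply pow_le_pow_right₀ (by norm_num) (by omega)
  have hs1 : s - 1 ≠ 0 := ne_of_gt (by linarith)
  have hioo : 1 / (s - 1) ∈ Set.Ioo (0:ℝ) 1 := by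
    constructor
    · exact div_pos one_pos (by linarith)
    · rw [div_lt_one (by linarith)]; linarith
  refine ⟨fun x hx => ?_, hioo⟩
  obtain ⟨hx0, hx1⟩ := hx
  set p : Fin n → ℝ := fun i : Fin n => if (i : ℕ) = 0 then (1:ℝ) else if (i : ℕ) = n - 1 then x else 0 with hp
  have hbounds : ∀ i, p i ∈ Set.Icc (0:ℝ) 1 := by
    intro i
    simp only [hp]
    split_ifs <;> constructor <;> norm_num <;> assumption
  have hcoord1 : coord n p 1 = 1 := by
    rw [coord, dif_pos ⟨le_refl 1, by omega⟩]
    simp [hp]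
  have hcoordn : coord n p n = x := by
    rw [coord, dif_pos ⟨by omega, le_refl n⟩]
    simp [hp, show ¬(n - 1 = 0) by omega]
  constructor
  · rintro ⟨⟨_, hpsi⟩, _⟩
    rw [psi_eval n hn x] at hpsi
    have key : (1+x)^2 = N * x^2 := by
      field_simp at hpsi
      rw [← hNdef] at hpsi
      exact mul_left_cancel₀ hN.ne' (by linear_combination N * hpsi)
    have h4 : (1 + x - s*x) * (1 + x + s*x) = 0 := by
      linear_combination key - x^2 * hs
    rcases mul_eq_zero.mp h4 with h | h
    · have hsx : x * (s - 1) = 1 := by linarith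
      field_simp
      linarith [hsx]
    · have : 0 ≤ s * x := by positivity
      linarith
  · intro hxval
    have hsx : 1 + x = s * x := by
      rw [hxval]
      field_simp
      ring
    have hxlt : x < 1 := hxval ▸ hioo.2
    refine ⟨⟨hbounds, ?_⟩, hbounds, 1, le_refl 1, by omega, ?_⟩
    · rw [psi_eval n hn x]
      have key : (1+x)^2 = N * x^2 := by
        linear_combination (1 + x + s*x) * hsx + x^2 * hs
      rw [← hNdef]
      field_simp
      linear_combination key
    · rw [show n - 1 + 1 = n by omega, hcoord1, hcoordn]
      exact fun h => absurd h.symm (ne_of_lt hxlt)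
end

section
/- Let n ≥ 3. If p ∈ Ind_n, then 𝟙 − p ∈ Ind_n (where 𝟙 = (1,…,1)), and c·p ∈ Ind_n for every real c with 0 < c ≤ 1. The same two closure properties hold with Ind_n replaced by GST_n. -/
lemma coord_smul (n : ℕ) (p : Fin n → ℝ) (c : ℝ) (k : ℕ) :
    coord n (c • p) k = c * coord n p k := by
  unfold coord; split <;> simp

lemma coord_one_sub (n : ℕ) (p : Fin n → ℝ) (k : ℕ) (h1 : 1 ≤ k) (h2 : k ≤ n) :
    coord n (1 - p) k = 1 - coord n p k := by
  unfold coord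
  rw [dif_pos ⟨h1, h2⟩, dif_pos ⟨h1, h2⟩]
  simp

lemma sum_choose_real (m : ℕ) : ∑ k ∈ Finset.range (m+1), (m.choose k : ℝ) = 2^m := by
  exact_mod_cast congrArg (fun x : ℕ => (x:ℝ)) (Nat.sum_range_choose m)

lemma sum_refl (m : ℕ) (f : ℕ → ℝ) :
    ∑ k ∈ Finset.range (m+1), (m.choose k : ℝ) * f (m+1-k)
      = ∑ k ∈ Finset.range (m+1), (m.choose k : ℝ) * f (k+1) := by
  rw [← Finset.sum_range_reflect (fun k => (m.choose k : ℝ) * f (k+1)) (m+1)]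
  apply Finset.sum_congr rfl
  intro k hk
  have hk' : k ≤ m := by simpa [Nat.lt_succ_iff] using Finset.mem_range.mp hk
  rw [show m + 1 - 1 - k = m - k by omega, Nat.choose_symm hk',
    show m - k + 1 = m + 1 - k by omega]

lemma sum_pascal (m : ℕ) (f : ℕ → ℝ) :
    ∑ k ∈ Finset.range (m+1), (m.choose k : ℝ) * (f (k+1) + f (k+2))
      = ∑ k ∈ Finset.range (m+2), ((m+1).choose k : ℝ) * f (k+1) := by
  have h1 : ∑ k ∈ Finset.range (m+2), ((m+1).choose k : ℝ) * f (k+1)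
      = ∑ k ∈ Finset.range (m+1), ((m+1).choose (k+1) : ℝ) * f (k+2) + f 1 := by
    rw [Finset.sum_range_succ' (fun k => ((m+1).choose k : ℝ) * f (k+1)) (m+1)]
    simp
  have h2 : ∑ k ∈ Finset.range (m+1), (m.choose k : ℝ) * f (k+1)
      = ∑ k ∈ Finset.range (m+1), (m.choose (k+1) : ℝ) * f (k+2) + f 1 := by
    rw [Finset.sum_range_succ' (fun k => (m.choose k : ℝ) * f (k+1)) m]
    rw [Finset.sum_range_succ (fun k => (m.choose (k+1) : ℝ) * f (k+2)) m]
    simp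
  have h3 : ∀ k, (((m+1).choose (k+1) : ℕ) : ℝ) = (m.choose k : ℝ) + (m.choose (k+1) : ℝ) := by
    intro k; rw [Nat.choose_succ_succ]; push_cast; ring
  rw [h1]
  have : ∑ k ∈ Finset.range (m+1), ((m+1).choose (k+1) : ℝ) * f (k+2)
      = ∑ k ∈ Finset.range (m+1), (m.choose k : ℝ) * f (k+2)
        + ∑ k ∈ Finset.range (m+1), (m.choose (k+1) : ℝ) * f (k+2) := by
    rw [← Finset.sum_add_distrib]
    exact Finset.sum_congr rfl fun k _ => by rw [h3]; ring
  rw [this]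
  have h4 : ∑ k ∈ Finset.range (m+1), (m.choose k : ℝ) * (f (k+1) + f (k+2))
      = ∑ k ∈ Finset.range (m+1), (m.choose k : ℝ) * f (k+1)
        + ∑ k ∈ Finset.range (m+1), (m.choose k : ℝ) * f (k+2) := by
    rw [← Finset.sum_add_distrib]
    exact Finset.sum_congr rfl fun k _ => by ring
  rw [h4]; linarith

lemma psi_smul (n : ℕ) (p : Fin n → ℝ) (c : ℝ) : psi n (c • p) = c^2 * psi n p := by
  unfold psi
  simp only [coord_smul]
  rw [show ∑ k ∈ Finset.range n, ((n-1).choose k : ℝ) * (c * coord n p (k+1))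
      = c * ∑ k ∈ Finset.range n, ((n-1).choose k : ℝ) * coord n p (k+1) by
    rw [Finset.mul_sum]; exact Finset.sum_congr rfl fun k _ => by ring]
  rw [show ∑ k ∈ Finset.range (n-1), ((n-2).choose k : ℝ) *
        ((c * coord n p (k+2))^2 + (c * coord n p (k+1)) * (c * coord n p (n-k-1)))
      = c^2 * ∑ k ∈ Finset.range (n-1), ((n-2).choose k : ℝ) *
        ((coord n p (k+2))^2 + coord n p (k+1) * coord n p (n-k-1)) by
    rw [Finset.mul_sum]; exact Finset.sum_congr rfl fun k _ => by ring]
  ring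

lemma psi_one_sub (n : ℕ) (hn : 2 ≤ n) (p : Fin n → ℝ) : psi n (1 - p) = psi n p := by
  obtain ⟨m, rfl⟩ : ∃ m, n = m + 2 := ⟨n - 2, by omega⟩
  unfold psi
  simp only [show m+2-1 = m+1 from rfl, show m+2-2 = m from rfl]
  set i : ℝ := ((2:ℝ)^(m+1))⁻¹ with hi_def
  set q : ℕ → ℝ := coord (m+2) p with hq
  have hcoord : ∀ k, 1 ≤ k → k ≤ m+2 → coord (m+2) (1-p) k = 1 - q k :=
    fun k h1 h2 => coord_one_sub (m+2) p k h1 h2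
  set S : ℝ := ∑ k ∈ Finset.range (m+2), ((m+1).choose k : ℝ) * q (k+1) with hS_def
  set P1 : ℝ := ∑ k ∈ Finset.range (m+1), (m.choose k : ℝ) * q (k+1) with hP1_def
  set P2 : ℝ := ∑ k ∈ Finset.range (m+1), (m.choose k : ℝ) * q (k+2) with hP2_def
  have hP : P1 + P2 = S := by
    rw [hP1_def, hP2_def, hS_def, ← sum_pascal m q, ← Finset.sum_add_distrib]
    exact Finset.sum_congr rfl fun k _ => by ring
  have hS1 : ∑ k ∈ Finset.range (m+2), ((m+1).choose k : ℝ) * coord (m+2) (1-p) (k+1)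
      = 2^(m+1) - S := by
    have : ∑ k ∈ Finset.range (m+2), ((m+1).choose k : ℝ) * coord (m+2) (1-p) (k+1)
        = ∑ k ∈ Finset.range (m+2), (((m+1).choose k : ℝ) - ((m+1).choose k : ℝ) * q (k+1)) := by
      apply Finset.sum_congr rfl
      intro k hk
      have hk' : k < m + 2 := Finset.mem_range.mp hk
      rw [hcoord (k+1) (by omega) (by omega)]; ring
    rw [this, Finset.sum_sub_distrib, sum_choose_real (m+1), hS_def]
  have hT1 : ∑ k ∈ Finset.range (m+1), (m.choose k : ℝ) *
        ((coord (m+2) (1-p) (k+2))^2 + coord (m+2) (1-p) (k+1) * coord (m+2) (1-p) (m+2-k-1))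
      = ∑ k ∈ Finset.range (m+1), (m.choose k : ℝ) * ((q (k+2))^2 + q (k+1) * q (m+1-k))
        + (2 * 2^m - 2 * P2 - P1 - ∑ k ∈ Finset.range (m+1), (m.choose k : ℝ) * q (m+1-k)) := by
    have key : ∑ k ∈ Finset.range (m+1), (m.choose k : ℝ) *
          ((coord (m+2) (1-p) (k+2))^2 + coord (m+2) (1-p) (k+1) * coord (m+2) (1-p) (m+2-k-1))
        = ∑ k ∈ Finset.range (m+1),
            ((m.choose k : ℝ) * ((q (k+2))^2 + q (k+1) * q (m+1-k))
             + (2 * (m.choose k : ℝ) - 2 * ((m.choose k : ℝ) * q (k+2))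
               - (m.choose k : ℝ) * q (k+1) - (m.choose k : ℝ) * q (m+1-k))) := by
      apply Finset.sum_congr rfl
      intro k hk
      have hk' : k < m + 1 := Finset.mem_range.mp hk
      rw [show m+2-k-1 = m+1-k by omega, hcoord (k+2) (by omega) (by omega),
        hcoord (k+1) (by omega) (by omega), hcoord (m+1-k) (by omega) (by omega)]
      ring
    rw [key, Finset.sum_add_distrib]
    congr 1
    rw [Finset.sum_sub_distrib, Finset.sum_sub_distrib, Finset.sum_sub_distrib,
      ← Finset.mul_sum, ← Finset.mul_sum, sum_choose_real m, hP2_def, hP1_def]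
  rw [hS1, hT1, sum_refl m q]
  rw [show (∑ k ∈ Finset.range (m+1), (m.choose k : ℝ) * q (k+1)) = P1 from rfl]
  rw [show (∑ k ∈ Finset.range (m+1), (m.choose k : ℝ) * ((q (k+2))^2 + q (k+1) * q (m+1-k)))
      = ∑ k ∈ Finset.range (m+1), (m.choose k : ℝ) *
          ((q (k+2))^2 + q (k+1) * q (m+2-k-1)) from
    Finset.sum_congr rfl fun k hk => by
      have := Finset.mem_range.mp hk
      rw [show m+2-k-1 = m+1-k by omega]]
  have hi : i * 2^(m+1) = 1 := inv_mul_cancel₀ (by positivity)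
  have hP2 : P2 = S - P1 := by linarith
  rw [hP2]
  set T : ℝ := ∑ k ∈ Finset.range (m+1), (m.choose k : ℝ) *
      ((q (k+2))^2 + q (k+1) * q (m+2-k-1)) with hT_def
  have h2m : (2:ℝ)^(m+1) = 2 * 2^m := by ring
  rw [h2m] at hi ⊢
  linear_combination (i * (2 * 2^m) - 2 * i * S) * hi

/-- For `n ≥ 3`: if `p ∈ Ind n` then `𝟙 - p ∈ Ind n` and `c • p ∈ Ind n` for all
`0 < c ≤ 1`; the same holds with `Ind n` replaced by `GST n`. -/
theorem involution_and_scaling (n : ℕ) (hn : 3 ≤ n) :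
    (∀ p ∈ Ind n, (1 - p) ∈ Ind n ∧ ∀ c : ℝ, 0 < c → c ≤ 1 → c • p ∈ Ind n) ∧
    (∀ p ∈ GST n, (1 - p) ∈ GST n ∧ ∀ c : ℝ, 0 < c → c ≤ 1 → c • p ∈ GST n) := by
  have hind : ∀ p ∈ Ind n, (1 - p) ∈ Ind n ∧ ∀ c : ℝ, 0 < c → c ≤ 1 → c • p ∈ Ind n := by
    intro p hp
    obtain ⟨hIcc, hpsi⟩ := hp
    have hIcc1 : ∀ i, (1 - p) i ∈ Set.Icc (0:ℝ) 1 := by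
      intro i
      have := hIcc i
      simp only [Pi.sub_apply, Pi.one_apply, Set.mem_Icc] at *
      constructor <;> linarith [this.1, this.2]
    refine ⟨⟨hIcc1, by rw [psi_one_sub n (by omega) p, hpsi]⟩, ?_⟩
    intro c hc hc1
    refine ⟨?_, by rw [psi_smul, hpsi]; ring⟩
    intro i
    have := hIcc i
    simp only [Pi.smul_apply, smul_eq_mul, Set.mem_Icc] at *
    exact ⟨mul_nonneg hc.le this.1, mul_le_one₀ hc1 this.1 this.2⟩
  refine ⟨hind, ?_⟩
  intro p hp
  obtain ⟨hpInd, hIcc, s, hs1, hs2, hne⟩ := hp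
  obtain ⟨h1sub, hsmul⟩ := hind p hpInd
  have hs1' : 1 ≤ n - s + 1 := by omega
  have hs2' : n - s + 1 ≤ n := by omega
  constructor
  · refine ⟨h1sub, h1sub.1, s, hs1, hs2, ?_⟩
    rw [coord_one_sub n p s hs1 hs2, coord_one_sub n p (n-s+1) hs1' hs2']
    intro h; apply hne; linarith
  · intro c hc hc1
    refine ⟨hsmul c hc hc1, (hsmul c hc hc1).1, s, hs1, hs2, ?_⟩
    rw [coord_smul, coord_smul]
    exact fun h => hne (mul_left_cancel₀ (ne_of_gt hc) h)
end

section
/- Let n ≥ 2. For all real numbers x, y and every vector p ∈ ℝ^n, ψ(x·p + y·𝟙) = x^2 · ψ(p), where 𝟙 = (1,…,1) ∈ ℝ^n. -/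
/-- For `n ≥ 2`, `ψ(x·p + y·𝟙) = x² ψ(p)` for all reals `x, y` and all `p ∈ ℝⁿ`. -/
theorem psi_affine (n : ℕ) (hn : 2 ≤ n) (x y : ℝ) (p : Fin n → ℝ) :
    psi n (x • p + y • (1 : Fin n → ℝ)) = x^2 * psi n p := by
  obtain ⟨m, rfl⟩ : ∃ m, n = m + 2 := ⟨n - 2, by omega⟩
  set q := x • p + y • (1 : Fin (m+2) → ℝ) with hq
  have hcoord : ∀ k, 1 ≤ k → k ≤ m + 2 → coord (m+2) q k = x * coord (m+2) p k + y := by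
    intro k h1 h2
    rw [coord, coord, dif_pos ⟨h1, h2⟩, dif_pos ⟨h1, h2⟩]
    simp [hq]
  set c : ℕ → ℝ := coord (m+2) p with hc
  set S : ℝ := ∑ k ∈ Finset.range (m+2), ((m+1).choose k : ℝ) * c (k+1) with hS
  set T : ℝ := ∑ k ∈ Finset.range (m+1),
      (m.choose k : ℝ) * ((c (k+2))^2 + c (k+1) * c (m+2-k-1)) with hT
  have hchoose1 : ∑ k ∈ Finset.range (m+2), ((m+1).choose k : ℝ) = 2^(m+1) := by
    exact_mod_cast Nat.sum_range_choose (m+1)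
  have hchoose2 : ∑ k ∈ Finset.range (m+1), (m.choose k : ℝ) = 2^m := by
    exact_mod_cast Nat.sum_range_choose m
  have hrefl : ∑ k ∈ Finset.range (m+1), (m.choose k : ℝ) * c (m+2-k-1)
      = ∑ k ∈ Finset.range (m+1), (m.choose k : ℝ) * c (k+1) := by
    rw [← Finset.sum_range_reflect (fun k => (m.choose k : ℝ) * c (k+1)) (m+1)]
    apply Finset.sum_congr rfl
    intro k hk
    have hk' : k ≤ m := by have := Finset.mem_range.mp hk; omega
    have e1 : m + 1 - 1 - k = m - k := by omega
    have e2 : m + 2 - k - 1 = m - k + 1 := by omega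
    rw [e1, e2, Nat.choose_symm hk']
  have hpascal : ∑ k ∈ Finset.range (m+1), (m.choose k : ℝ) * c (k+2)
      + ∑ k ∈ Finset.range (m+1), (m.choose k : ℝ) * c (k+1) = S := by
    rw [hS, Finset.sum_range_succ' (fun k => ((m+1).choose k : ℝ) * c (k+1)) (m+1)]
    have e1 : ∀ k ∈ Finset.range (m+1), ((m+1).choose (k+1) : ℝ) * c (k+1+1)
        = (m.choose k : ℝ) * c (k+2) + (m.choose (k+1) : ℝ) * c (k+2) := by
      intro k _
      rw [Nat.choose_succ_succ]
      push_cast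
      ring
    rw [Finset.sum_congr rfl e1, Finset.sum_add_distrib]
    have e2 : ∑ k ∈ Finset.range (m+1), (m.choose k : ℝ) * c (k+1)
        = ∑ k ∈ Finset.range m, (m.choose (k+1) : ℝ) * c (k+1+1) + (m.choose 0 : ℝ) * c (0+1) :=
      Finset.sum_range_succ' _ m
    have e3 : ∑ k ∈ Finset.range (m+1), (m.choose (k+1) : ℝ) * c (k+2)
        = ∑ k ∈ Finset.range m, (m.choose (k+1) : ℝ) * c (k+1+1) := by
      rw [Finset.sum_range_succ, Nat.choose_succ_self]
      simp
    rw [e2, e3]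
    simp
    ring
  have h1 : ∑ k ∈ Finset.range (m+2), ((m+1).choose k : ℝ) * coord (m+2) q (k+1)
      = x * S + y * 2^(m+1) := by
    have e : ∀ k ∈ Finset.range (m+2), ((m+1).choose k : ℝ) * coord (m+2) q (k+1)
        = x * (((m+1).choose k : ℝ) * c (k+1)) + y * ((m+1).choose k : ℝ) := by
      intro k hk
      rw [hcoord (k+1) (by omega) (by have := Finset.mem_range.mp hk; omega)]
      ring
    rw [Finset.sum_congr rfl e, Finset.sum_add_distrib, ← Finset.mul_sum, ← Finset.mul_sum,
      hchoose1, hS]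
  have h2 : ∑ k ∈ Finset.range (m+1),
      (m.choose k : ℝ) * ((coord (m+2) q (k+2))^2 + coord (m+2) q (k+1) * coord (m+2) q (m+2-k-1))
      = x^2 * T + 2 * x * y * S + 2^(m+1) * y^2 := by
    have e : ∀ k ∈ Finset.range (m+1),
        (m.choose k : ℝ) * ((coord (m+2) q (k+2))^2 + coord (m+2) q (k+1) * coord (m+2) q (m+2-k-1))
        = x^2 * ((m.choose k : ℝ) * ((c (k+2))^2 + c (k+1) * c (m+2-k-1)))
          + (x * y * 2) * ((m.choose k : ℝ) * c (k+2))
          + (x * y) * ((m.choose k : ℝ) * c (k+1))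
          + (x * y) * ((m.choose k : ℝ) * c (m+2-k-1))
          + (2 * y^2) * (m.choose k : ℝ) := by
      intro k hk
      have hkm := Finset.mem_range.mp hk
      rw [hcoord (k+2) (by omega) (by omega), hcoord (k+1) (by omega) (by omega),
        hcoord (m+2-k-1) (by omega) (by omega)]
      ring
    rw [Finset.sum_congr rfl e]
    simp only [Finset.sum_add_distrib, ← Finset.mul_sum]
    rw [← hT, hrefl, hchoose2]
    linear_combination (2 * x * y) * hpascal
  have hne : ((2:ℝ)^(m+1)) ≠ 0 := by positivity
  simp only [psi, show m+2-1 = m+1 from rfl, show m+2-2 = m from rfl]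
  rw [← hc, h1, h2, ← hS, ← hT]
  field_simp
  ring
end

section
/- Let n ≥ 2 and let p, q ∈ Ind_n. Then the line segment { t·p + (1−t)·q : t ∈ [0,1] } is contained in Ind_n if and only if ψ(p + q) = 0. -/
noncomputable def Ssum (n : ℕ) (p : Fin n → ℝ) : ℝ :=
  ∑ k ∈ Finset.range n, ((n-1).choose k : ℝ) * coord n p (k+1)

noncomputable def Bsum (n : ℕ) (p q : Fin n → ℝ) : ℝ :=
  ∑ k ∈ Finset.range (n-1),
      ((n-2).choose k : ℝ) * (coord n p (k+2) * coord n q (k+2)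
        + coord n p (k+1) * coord n q (n-k-1))

lemma coord_comb (n : ℕ) (p q : Fin n → ℝ) (a b : ℝ) (k : ℕ) :
    coord n (a • p + b • q) k = a * coord n p k + b * coord n q k := by
  unfold coord
  split
  · simp
  · simp

lemma Ssum_comb (n : ℕ) (p q : Fin n → ℝ) (a b : ℝ) :
    Ssum n (a • p + b • q) = a * Ssum n p + b * Ssum n q := by
  unfold Ssum
  simp only [Finset.mul_sum]
  rw [← Finset.sum_add_distrib]
  refine Finset.sum_congr rfl fun k _ => ?_
  rw [coord_comb]
  ring

lemma Bsum_comb (n : ℕ) (p q : Fin n → ℝ) (a b : ℝ) :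
    Bsum n (a • p + b • q) (a • p + b • q)
      = a^2 * Bsum n p p + b^2 * Bsum n q q + a*b * Bsum n p q + a*b * Bsum n q p := by
  unfold Bsum
  simp only [Finset.mul_sum]
  rw [← Finset.sum_add_distrib, ← Finset.sum_add_distrib, ← Finset.sum_add_distrib]
  refine Finset.sum_congr rfl fun k _ => ?_
  simp only [coord_comb]
  ring

lemma psi_eq (n : ℕ) (p : Fin n → ℝ) :
    psi n p = (((2:ℝ)^(n-1))⁻¹ * Ssum n p)^2 - ((2:ℝ)^(n-1))⁻¹ * Bsum n p p := by
  unfold psi Ssum Bsum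
  congr 2
  refine Finset.sum_congr rfl fun k _ => ?_
  ring

lemma psi_key (n : ℕ) (p q : Fin n → ℝ) (a b : ℝ) :
    psi n (a • p + b • q)
      = a^2 * psi n p + b^2 * psi n q + a*b*(psi n (p+q) - psi n p - psi n q) := by
  have hpq : p + q = (1:ℝ) • p + (1:ℝ) • q := by simp
  rw [psi_eq, psi_eq, psi_eq, hpq, psi_eq, Ssum_comb, Ssum_comb, Bsum_comb, Bsum_comb]
  ring

/-- For `n ≥ 2` and `p, q ∈ Ind n`, the line segment between `p` and `q` lies in
`Ind n` if and only if `ψ(p + q) = 0`. -/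
theorem segment_in_ind_iff (n : ℕ) (hn : 2 ≤ n) (p q : Fin n → ℝ)
    (hp : p ∈ Ind n) (hq : q ∈ Ind n) :
    (∀ t ∈ Set.Icc (0:ℝ) 1, t • p + (1 - t) • q ∈ Ind n) ↔ psi n (p + q) = 0 := by
  obtain ⟨hp1, hp2⟩ := hp
  obtain ⟨hq1, hq2⟩ := hq
  constructor
  · intro h
    have h2 := (h (1/2) (by norm_num)).2
    rw [psi_key, hp2, hq2] at h2
    linarith
  · intro h t ht
    refine ⟨fun i => ?_, ?_⟩
    · obtain ⟨ht0, ht1⟩ := ht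
      obtain ⟨hpi0, hpi1⟩ := hp1 i
      obtain ⟨hqi0, hqi1⟩ := hq1 i
      simp only [Pi.add_apply, Pi.smul_apply, smul_eq_mul]
      constructor
      · nlinarith
      · nlinarith
    · rw [psi_key, hp2, hq2, h]
      ring
end

section
/- For every n ≥ 3 one has H_n · 𝟙 = 0, where 𝟙 = (1,…,1) ∈ ℝ^n; moreover, for every n ≥ 4 the null space of H_n is exactly the one-dimensional subspace spanned by 𝟙 (equivalently, H_n has rank n − 1). -/
namespace HK

noncomputable def a (n : ℕ) : ℝ := ((2:ℝ)^(n-1))⁻¹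

noncomputable def Sf (n : ℕ) (p : Fin n → ℝ) : ℝ :=
  ∑ k ∈ Finset.range n, ((n-1).choose k : ℝ) * coord n p (k+1)

noncomputable def Tf (n : ℕ) (p : Fin n → ℝ) : ℝ :=
  ∑ k ∈ Finset.range (n-1),
      ((n-2).choose k : ℝ) * ((coord n p (k+2))^2 + coord n p (k+1) * coord n p (n-k-1))

noncomputable def crossf (n : ℕ) (p q : Fin n → ℝ) : ℝ :=
  ∑ k ∈ Finset.range (n-1),
      ((n-2).choose k : ℝ) * (2 * coord n p (k+2) * coord n q (k+2)
        + coord n p (k+1) * coord n q (n-k-1) + coord n q (k+1) * coord n p (n-k-1))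

noncomputable def Bf (n : ℕ) (p q : Fin n → ℝ) : ℝ := psi n (p+q) - psi n p - psi n q

lemma coord_apply (n : ℕ) (x : Fin n → ℝ) (k : ℕ) (h1 : 1 ≤ k) (h2 : k ≤ n) :
    coord n x k = x ⟨k-1, by omega⟩ := by simp [coord, h1, h2]

lemma coord_apply' (n : ℕ) (x : Fin n → ℝ) (k m : ℕ) (h : m + 1 = k) (h2 : k ≤ n) :
    coord n x k = x ⟨m, by omega⟩ := by
  subst h
  rw [coord_apply n x _ (by omega) h2]
  congr 1

lemma coord_add (n : ℕ) (x y : Fin n → ℝ) (k : ℕ) :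
    coord n (x+y) k = coord n x k + coord n y k := by
  unfold coord; split <;> simp

lemma coord_single (n : ℕ) (i : Fin n) (k : ℕ) :
    coord n (Pi.single i (1:ℝ)) k = if k = i.val + 1 then 1 else 0 := by
  unfold coord
  by_cases h : 1 ≤ k ∧ k ≤ n
  · rw [dif_pos h, Pi.single_apply]
    refine if_congr ?_ rfl rfl
    rw [Fin.ext_iff, Fin.val_mk]
    omega
  · rw [dif_neg h, if_neg]
    have hi := i.isLt
    omega

lemma Sf_add (n : ℕ) (x y : Fin n → ℝ) : Sf n (x+y) = Sf n x + Sf n y := by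
  simp [Sf, coord_add, mul_add, Finset.sum_add_distrib]

lemma psi_eq (n : ℕ) (x : Fin n → ℝ) : psi n x = (a n * Sf n x)^2 - a n * Tf n x := rfl

lemma Tf_add (n : ℕ) (x y : Fin n → ℝ) :
    Tf n (x+y) = Tf n x + Tf n y + crossf n x y := by
  unfold Tf crossf
  rw [← Finset.sum_add_distrib, ← Finset.sum_add_distrib]
  refine Finset.sum_congr rfl fun k _ => ?_
  rw [coord_add, coord_add, coord_add]
  ring

lemma Bf_eq (n : ℕ) (x y : Fin n → ℝ) :
    Bf n x y = 2 * (a n)^2 * Sf n x * Sf n y - a n * crossf n x y := by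
  unfold Bf
  rw [psi_eq, psi_eq, psi_eq, Sf_add, Tf_add]
  ring

lemma Sf_single (n : ℕ) (i : Fin n) : Sf n (Pi.single i 1) = ((n-1).choose i.val : ℝ) := by
  unfold Sf
  have key : ∀ k ∈ Finset.range n, ((n-1).choose k : ℝ) * coord n (Pi.single i 1) (k+1)
      = if k = i.val then ((n-1).choose k : ℝ) else 0 := by
    intro k _
    rw [coord_single]
    by_cases h : k = i.val
    · rw [if_pos (by omega), if_pos h, mul_one]
    · rw [if_neg (by omega), if_neg h, mul_zero]
  rw [Finset.sum_congr rfl key, Finset.sum_ite_eq', if_pos (Finset.mem_range.2 i.isLt)]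

lemma crossf_single (n : ℕ) (hn : 3 ≤ n) (i : Fin n) (x : Fin n → ℝ) :
    crossf n (Pi.single i 1) x =
      (if 1 ≤ i.val then 2 * ((n-2).choose (i.val-1) : ℝ) * x i else 0)
      + (if i.val ≤ n-2 then 2 * ((n-2).choose i.val : ℝ) * x ⟨n-2-i.val, by omega⟩ else 0) := by
  have hi := i.isLt
  have hsum : crossf n (Pi.single i 1) x
      = ∑ k ∈ Finset.range (n-1),
          ((if k+2 = i.val+1 then 2*((n-2).choose k:ℝ) * coord n x (k+2) else 0)
          + (if k+1 = i.val+1 then ((n-2).choose k:ℝ) * coord n x (n-k-1) else 0)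
          + (if n-k-1 = i.val+1 then ((n-2).choose k:ℝ) * coord n x (k+1) else 0)) := by
    refine Finset.sum_congr rfl fun k _ => ?_
    rw [coord_single, coord_single, coord_single]
    split_ifs <;> ring
  rw [hsum, Finset.sum_add_distrib, Finset.sum_add_distrib]
  have e1 : (∑ k ∈ Finset.range (n-1),
        if k+2 = i.val+1 then 2*((n-2).choose k:ℝ) * coord n x (k+2) else 0)
      = if 1 ≤ i.val then 2 * ((n-2).choose (i.val-1) : ℝ) * x i else 0 := by
    by_cases h1 : 1 ≤ i.val
    · rw [if_pos h1]
      have key : ∀ k ∈ Finset.range (n-1),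
          (if k+2 = i.val+1 then 2*((n-2).choose k:ℝ) * coord n x (k+2) else 0)
          = if k = i.val - 1 then 2*((n-2).choose k:ℝ) * coord n x (k+2) else 0 :=
        fun k _ => if_congr (by omega) rfl rfl
      rw [Finset.sum_congr rfl key, Finset.sum_ite_eq', if_pos (Finset.mem_range.2 (by omega))]
      rw [coord_apply' n x (i.val - 1 + 2) i.val (by omega) (by omega)]
    · rw [if_neg h1]
      exact Finset.sum_eq_zero fun k hk => if_neg (by omega)
  have e2 : (∑ k ∈ Finset.range (n-1),
        if k+1 = i.val+1 then ((n-2).choose k:ℝ) * coord n x (n-k-1) else 0)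
      = if i.val ≤ n-2 then ((n-2).choose i.val : ℝ) * x ⟨n-2-i.val, by omega⟩ else 0 := by
    have key : ∀ k ∈ Finset.range (n-1),
        (if k+1 = i.val+1 then ((n-2).choose k:ℝ) * coord n x (n-k-1) else 0)
        = if k = i.val then ((n-2).choose k:ℝ) * coord n x (n-k-1) else 0 :=
      fun k _ => if_congr (by omega) rfl rfl
    rw [Finset.sum_congr rfl key, Finset.sum_ite_eq']
    by_cases h2 : i.val ≤ n-2
    · rw [if_pos (Finset.mem_range.2 (by omega)), if_pos h2,
        coord_apply' n x (n-i.val-1) (n-2-i.val) (by omega) (by omega)]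
    · rw [if_neg (fun h => absurd (Finset.mem_range.1 h) (by omega)), if_neg h2]
  have e3 : (∑ k ∈ Finset.range (n-1),
        if n-k-1 = i.val+1 then ((n-2).choose k:ℝ) * coord n x (k+1) else 0)
      = if i.val ≤ n-2 then ((n-2).choose i.val : ℝ) * x ⟨n-2-i.val, by omega⟩ else 0 := by
    by_cases h2 : i.val ≤ n-2
    · rw [if_pos h2]
      have key : ∀ k ∈ Finset.range (n-1),
          (if n-k-1 = i.val+1 then ((n-2).choose k:ℝ) * coord n x (k+1) else 0)
          = if k = n-2-i.val then ((n-2).choose k:ℝ) * coord n x (k+1) else 0 :=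
        fun k hk => if_congr (by have := Finset.mem_range.1 hk; omega) rfl rfl
      rw [Finset.sum_congr rfl key, Finset.sum_ite_eq', if_pos (Finset.mem_range.2 (by omega))]
      rw [coord_apply' n x (n-2-i.val+1) (n-2-i.val) rfl (by omega),
        show (n-2).choose (n-2-i.val) = (n-2).choose i.val from Nat.choose_symm h2]
    · rw [if_neg h2]
      exact Finset.sum_eq_zero fun k hk => if_neg (by omega)
  rw [e1, e2, e3]
  split_ifs <;> ring

open Matrix in
lemma mulVec_eq_B (n : ℕ) (H : Matrix (Fin n) (Fin n) ℝ) (hsymm : H.IsSymm)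
    (hH : ∀ x : Fin n → ℝ, psi n x = (1/2) * (x ⬝ᵥ H *ᵥ x)) (x : Fin n → ℝ) (i : Fin n) :
    (H *ᵥ x) i = Bf n (Pi.single i 1) x := by
  have hcomm : ∀ p q : Fin n → ℝ, q ⬝ᵥ H *ᵥ p = p ⬝ᵥ H *ᵥ q := fun p q => by
    rw [Matrix.dotProduct_mulVec, ← Matrix.mulVec_transpose, hsymm.eq, dotProduct_comm]
  have hB : Bf n (Pi.single i 1) x = Pi.single i 1 ⬝ᵥ H *ᵥ x := by
    unfold Bf
    rw [hH, hH, hH, Matrix.mulVec_add, dotProduct_add, add_dotProduct, add_dotProduct,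
      hcomm (Pi.single i 1) x]
    ring
  rw [hB]
  simp [single_dotProduct]

lemma B_single (n : ℕ) (hn : 3 ≤ n) (i : Fin n) (x : Fin n → ℝ) :
    Bf n (Pi.single i 1) x
      = 2 * (a n)^2 * ((n-1).choose i.val : ℝ) * Sf n x
        - a n * ((if 1 ≤ i.val then 2 * ((n-2).choose (i.val-1) : ℝ) * x i else 0)
          + (if i.val ≤ n-2 then 2 * ((n-2).choose i.val : ℝ) * x ⟨n-2-i.val, by omega⟩ else 0)) := by
  rw [Bf_eq, Sf_single, crossf_single n hn]


lemma a_pos (n : ℕ) : 0 < a n := by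
  unfold a; positivity

lemma a_mul (n : ℕ) : a n * 2^(n-1) = 1 := by
  unfold a
  rw [inv_mul_cancel₀ (by positivity)]

lemma Sf_one (n : ℕ) (hn : 1 ≤ n) : Sf n (1 : Fin n → ℝ) = 2^(n-1) := by
  unfold Sf
  have key : ∀ k ∈ Finset.range n, ((n-1).choose k : ℝ) * coord n (1 : Fin n → ℝ) (k+1)
      = (((n-1).choose k : ℕ) : ℝ) := by
    intro k hk
    have hk' := Finset.mem_range.1 hk
    rw [coord, dif_pos (by omega : 1 ≤ k + 1 ∧ k + 1 ≤ n), Pi.one_apply, mul_one]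
  rw [Finset.sum_congr rfl key, ← Nat.cast_sum]
  have h : ∑ k ∈ Finset.range n, (n-1).choose k = 2^(n-1) := by
    obtain ⟨m, rfl⟩ : ∃ m, n = m + 1 := ⟨n-1, by omega⟩
    simpa using Nat.sum_range_choose m
  rw [h]
  push_cast
  rfl

lemma pascal (n I : ℕ) (h1 : 1 ≤ I) (h2 : I ≤ n-2) (hn : 3 ≤ n) :
    ((n-1).choose I : ℝ) = ((n-2).choose (I-1) : ℝ) + ((n-2).choose I : ℝ) := by
  have h : (n-1).choose I = (n-2).choose (I-1) + (n-2).choose I := by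
    obtain ⟨m, rfl⟩ : ∃ m, n = m + 2 := ⟨n-2, by omega⟩
    obtain ⟨J, rfl⟩ : ∃ J, I = J + 1 := ⟨I-1, by omega⟩
    exact Nat.choose_succ_succ m J
  rw [h]; push_cast; ring

lemma choose_logconcave (m j : ℕ) (h2 : j + 2 ≤ m) :
    m.choose j * m.choose (j+2) < m.choose (j+1) * m.choose (j+1) := by
  obtain ⟨t, rfl⟩ : ∃ t, m = j + 2 + t := ⟨m - (j+2), by omega⟩
  have h1 := Nat.choose_succ_right_eq (j+2+t) (j+1)
  have h0 := Nat.choose_succ_right_eq (j+2+t) j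
  have hs1 : j + 2 + t - (j+1) = t + 1 := by omega
  have hs0 : j + 2 + t - j = t + 2 := by omega
  rw [hs1] at h1
  rw [hs0] at h0
  have hc1 : 0 < (j+2+t).choose (j+1) := Nat.choose_pos (by omega)
  nlinarith [h1, h0, hc1]

end HK

open Matrix in
/-- If `H` is the (symmetric) Hessian matrix of the quadratic form `ψ`, i.e.
`ψ(x) = (1/2) xᵀ H x` for all `x`, then for `n ≥ 3`, `H 𝟙 = 0`; and for `n ≥ 4`
the null space of `H` is exactly the span of `𝟙`. -/
theorem hessian_kernel (n : ℕ) (H : Matrix (Fin n) (Fin n) ℝ) (hsymm : H.IsSymm)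
    (hH : ∀ x : Fin n → ℝ, psi n x = (1/2) * (x ⬝ᵥ H *ᵥ x)) :
    (3 ≤ n → H *ᵥ (1 : Fin n → ℝ) = 0) ∧
    (4 ≤ n → ∀ x : Fin n → ℝ, H *ᵥ x = 0 ↔ ∃ c : ℝ, x = c • (1 : Fin n → ℝ)) := by
  have hpart1 : 3 ≤ n → H *ᵥ (1 : Fin n → ℝ) = 0 := by
    intro hn
    have hA := HK.a_mul n
    funext i
    have hi := i.isLt
    rw [Pi.zero_apply, HK.mulVec_eq_B n H hsymm hH, HK.B_single n hn, HK.Sf_one n (by omega)]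
    simp only [Pi.one_apply]
    by_cases h1 : 1 ≤ i.val <;> by_cases h2 : i.val ≤ n-2
    · rw [if_pos h1, if_pos h2, HK.pascal n i.val h1 h2 hn]
      linear_combination (2 * HK.a n * (((n-2).choose (i.val-1) : ℝ) + ((n-2).choose i.val : ℝ))) * hA
    · rw [if_pos h1, if_neg h2,
        show (n-1).choose i.val = 1 by rw [show i.val = n-1 by omega]; exact Nat.choose_self _,
        show (n-2).choose (i.val-1) = 1 by rw [show i.val-1 = n-2 by omega]; exact Nat.choose_self _]
      push_cast
      linear_combination (2 * HK.a n) * hA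
    · rw [if_neg h1, if_pos h2,
        show (n-1).choose i.val = 1 by rw [show i.val = 0 by omega]; exact Nat.choose_zero_right _,
        show (n-2).choose i.val = 1 by rw [show i.val = 0 by omega]; exact Nat.choose_zero_right _]
      push_cast
      linear_combination (2 * HK.a n) * hA
    · omega
  refine ⟨hpart1, ?_⟩
  intro hn x
  constructor
  · intro hx
    set c := HK.a n * HK.Sf n x with hc
    set y : ℕ → ℝ := fun I => if h : I < n then x ⟨I, h⟩ else 0 with hydef
    have hyI : ∀ (I : ℕ) (h : I < n), y I = x ⟨I, h⟩ := fun I h => by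
      simp only [hydef]
      exact dif_pos h
    have h2a : (2 : ℝ) * HK.a n ≠ 0 := by
      have := HK.a_pos n
      positivity
    have heq : ∀ (I : ℕ), I < n → ((n-1).choose I : ℝ) * c
        = (if 1 ≤ I then ((n-2).choose (I-1) : ℝ) * y I else 0)
          + (if I ≤ n-2 then ((n-2).choose I : ℝ) * y (n-2-I) else 0) := by
      intro I hI
      have h0 : HK.Bf n (Pi.single (⟨I, hI⟩ : Fin n) 1) x = 0 := by
        rw [← HK.mulVec_eq_B n H hsymm hH x ⟨I, hI⟩, hx, Pi.zero_apply]
      rw [HK.B_single n (by omega) ⟨I, hI⟩ x] at h0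
      simp only [Fin.val_mk] at h0
      rw [← hyI I hI, ← hyI (n-2-I) (by omega)] at h0
      split_ifs at h0 ⊢ <;>
        · refine mul_left_cancel₀ h2a ?_
          rw [hc]
          linear_combination h0
    have h_nm1 : y (n-1) = c := by
      have h := heq (n-1) (by omega)
      rw [if_pos (by omega), if_neg (by omega), Nat.choose_self,
        show n-1-1 = n-2 by omega, Nat.choose_self] at h
      push_cast at h
      linarith
    have h_nm2 : y (n-2) = c := by
      have h := heq 0 (by omega)
      rw [if_neg (by omega), if_pos (by omega), Nat.choose_zero_right, Nat.choose_zero_right,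
        Nat.sub_zero] at h
      push_cast at h
      linarith
    have hE : ∀ I : ℕ, 1 ≤ I → I ≤ n-2 →
        ((n-2).choose (I-1) : ℝ) * (y I - c) + ((n-2).choose I : ℝ) * (y (n-2-I) - c) = 0 := by
      intro I hI1 hI2
      have h := heq I (by omega)
      rw [if_pos hI1, if_pos hI2, HK.pascal n I hI1 hI2 (by omega)] at h
      linarith
    have hall : ∀ (I : ℕ), I < n → y I = c := by
      intro I hI
      by_cases e1 : I = n-1
      · rw [e1]; exact h_nm1
      by_cases e2 : I = n-2
      · rw [e2]; exact h_nm2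
      by_cases hI1 : 1 ≤ I
      · have eI := hE I hI1 (by omega)
        have eJ := hE (n-2-I) (by omega) (by omega)
        rw [show n-2-(n-2-I) = I by omega,
          show (n-2).choose (n-2-I-1) = (n-2).choose (I+1) by
            rw [show n-2-I-1 = n-2-(I+1) by omega]; exact Nat.choose_symm (by omega),
          show (n-2).choose (n-2-I) = (n-2).choose I from Nat.choose_symm (by omega)] at eJ
        have hdet : ((n-2).choose (I-1)) * ((n-2).choose (I+1))
            < ((n-2).choose I) * ((n-2).choose I) := by
          have h := HK.choose_logconcave (n-2) (I-1) (by omega)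
          rw [show I-1+2 = I+1 by omega, show I-1+1 = I by omega] at h
          exact h
        have hdetR : ((n-2).choose (I-1) : ℝ) * ((n-2).choose (I+1))
            < ((n-2).choose I : ℝ) * ((n-2).choose I) := by exact_mod_cast hdet
        have hzero : ((((n-2).choose I : ℝ)) * ((n-2).choose I)
            - (((n-2).choose (I-1) : ℝ)) * ((n-2).choose (I+1))) * (y I - c) = 0 := by
          linear_combination ((n-2).choose I : ℝ) * eJ - ((n-2).choose (I+1) : ℝ) * eI
        rcases mul_eq_zero.1 hzero with h | h
        · linarith
        · linarith
      · have hI0 : I = 0 := by omega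
        have e := hE (n-2) (by omega) (le_refl _)
        rw [show n-2-(n-2) = 0 by omega, Nat.choose_self, h_nm2] at e
        rw [hI0]
        push_cast at e
        linarith
    refine ⟨c, funext fun i => ?_⟩
    have h := hall i.val i.isLt
    rw [hyI i.val i.isLt] at h
    simpa using h
  · rintro ⟨d, rfl⟩
    rw [Matrix.mulVec_smul, hpart1 (by omega), smul_zero]
end

section
/- Let n ≥ 3, let v ∈ ℝ^n be the vector with i-th entry v_i = (√2 / 2^{n−1})·C(n−1, i−1) for i = 1,…,n, and set X = v·vᵀ − H_n. Then the matrix X is invertible (it has rank n). -/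
lemma coord_lt (n : ℕ) (x : Fin n → ℝ) (k : ℕ) (h : k < n) :
    coord n x (k+1) = x ⟨k, h⟩ := by
  rw [coord, dif_pos ⟨by omega, by omega⟩]
  congr 1

lemma coord_add (n : ℕ) (z y : Fin n → ℝ) (m : ℕ) :
    coord n (z + y) m = coord n z m + coord n y m := by
  unfold coord; split_ifs <;> simp

lemma coord_single (n : ℕ) (i : Fin n) (m : ℕ) :
    coord n (Pi.single i (1:ℝ)) m = if m = (i:ℕ)+1 then 1 else 0 := by
  unfold coord
  split_ifs with h h2 h2
  · have : (⟨m-1, by omega⟩ : Fin n) = i := by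
      apply Fin.ext; simp; omega
    rw [this, Pi.single_eq_same]
  · apply Pi.single_eq_of_ne
    intro hc
    apply h2
    have := congrArg Fin.val hc
    simp at this
    omega
  · exact absurd ⟨by omega, by omega⟩ h
  · rfl

lemma lc (m k : ℕ) (hk : 1 ≤ k) (hk2 : k + 1 ≤ m) :
    m.choose (k-1) * m.choose (k+1) < (m.choose k)^2 := by
  have h1 : m.choose (k+1) * (k+1) = m.choose k * (m - k) := Nat.choose_succ_right_eq m k
  have h2 : m.choose k * k = m.choose (k-1) * (m - (k-1)) := by
    have := Nat.choose_succ_right_eq m (k-1)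
    rwa [Nat.sub_add_cancel hk] at this
  have key : m.choose (k-1) * m.choose (k+1) * ((k+1) * (m - (k-1))) =
      (m.choose k)^2 * (k * (m-k)) := by
    calc m.choose (k-1) * m.choose (k+1) * ((k+1) * (m - (k-1)))
        = (m.choose (k+1) * (k+1)) * (m.choose (k-1) * (m - (k-1))) := by ring
      _ = (m.choose k * (m-k)) * (m.choose k * k) := by rw [h1, ← h2]
      _ = (m.choose k)^2 * (k * (m-k)) := by ring
  have hB : 0 < m.choose k := Nat.choose_pos (by omega)
  have hlt : k * (m-k) < (k+1) * (m - (k-1)) := by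
    have h3 : m - (k-1) = (m-k) + 1 := by omega
    rw [h3]
    have : 0 < m - k := by omega
    nlinarith
  have : m.choose (k-1) * m.choose (k+1) * ((k+1) * (m - (k-1))) <
      (m.choose k)^2 * ((k+1) * (m - (k-1))) := by
    rw [key]
    exact (Nat.mul_lt_mul_left (by positivity)).mpr hlt
  exact Nat.lt_of_mul_lt_mul_right this

/-- The pure quadratic part of `psi` (without the prefactor). -/
noncomputable def Qf (n : ℕ) (x : Fin n → ℝ) : ℝ :=
  ∑ k ∈ Finset.range (n-1),
    ((n-2).choose k : ℝ) * ((coord n x (k+2))^2 + coord n x (k+1) * coord n x (n-k-1))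

/-- The associated bilinear-type expression. -/
noncomputable def Bf (n : ℕ) (z y : Fin n → ℝ) : ℝ :=
  ∑ k ∈ Finset.range (n-1),
    ((n-2).choose k : ℝ) * (2 * coord n z (k+2) * coord n y (k+2)
      + coord n z (k+1) * coord n y (n-k-1) + coord n y (k+1) * coord n z (n-k-1))

lemma Qf_add (n : ℕ) (z y : Fin n → ℝ) :
    Qf n (z + y) = Qf n z + Qf n y + Bf n z y := by
  unfold Qf Bf
  rw [← Finset.sum_add_distrib, ← Finset.sum_add_distrib]
  refine Finset.sum_congr rfl fun k _ => ?_
  rw [coord_add, coord_add, coord_add]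
  ring

lemma sum_pick (n : ℕ) (f : ℕ → ℝ) (c : ℕ) (hc : c < n) :
    ∑ k ∈ Finset.range n, (if k = c then f k else 0) = f c := by
  rw [Finset.sum_ite_eq' (Finset.range n) c f, if_pos (Finset.mem_range.2 hc)]

lemma Bf_single (n : ℕ) (hn : 3 ≤ n) (t : ℕ) (ht : t < n) (y : Fin n → ℝ) :
    Bf n (Pi.single ⟨t, ht⟩ 1) y =
      2 * ((if 1 ≤ t then ((n-2).choose (t-1) : ℝ) else 0) * coord n y (t+1)
        + (if t ≤ n-2 then ((n-2).choose t : ℝ) else 0) * coord n y (n-1-t)) := by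
  unfold Bf
  by_cases hb1 : 1 ≤ t
  · by_cases hb2 : t ≤ n-2
    · -- main case : 1 ≤ t ≤ n-2
      have step : ∀ k ∈ Finset.range (n-1),
          ((n-2).choose k : ℝ) * (2 * coord n (Pi.single (⟨t, ht⟩ : Fin n) (1:ℝ)) (k+2) * coord n y (k+2)
            + coord n (Pi.single (⟨t, ht⟩ : Fin n) (1:ℝ)) (k+1) * coord n y (n-k-1)
            + coord n y (k+1) * coord n (Pi.single (⟨t, ht⟩ : Fin n) (1:ℝ)) (n-k-1))
          = (if k = t-1 then 2*((n-2).choose k : ℝ)*coord n y (k+2) else 0)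
            + ((if k = t then ((n-2).choose k : ℝ)*coord n y (n-k-1) else 0)
            + (if k = n-2-t then ((n-2).choose k : ℝ)*coord n y (k+1) else 0)) := by
        intro k hk
        simp only [Finset.mem_range] at hk
        simp only [coord_single, Fin.val_mk]
        simp only [show (k+2 = t+1) = (k = t-1) from propext (by omega),
            show (k+1 = t+1) = (k = t) from propext (by omega),
            show (n-k-1 = t+1) = (k = n-2-t) from propext (by omega)]
        split_ifs <;> ring
      rw [Finset.sum_congr rfl step, Finset.sum_add_distrib, Finset.sum_add_distrib,
        sum_pick _ _ _ (by omega), sum_pick _ _ _ (by omega), sum_pick _ _ _ (by omega),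
        if_pos hb1, if_pos hb2,
        show t-1+2 = t+1 by omega, show n-t-1 = n-1-t by omega,
        show n-2-t+1 = n-1-t by omega, Nat.choose_symm hb2]
      ring
    · -- t = n-1
      have htn : t = n-1 := by omega
      have step : ∀ k ∈ Finset.range (n-1),
          ((n-2).choose k : ℝ) * (2 * coord n (Pi.single (⟨t, ht⟩ : Fin n) (1:ℝ)) (k+2) * coord n y (k+2)
            + coord n (Pi.single (⟨t, ht⟩ : Fin n) (1:ℝ)) (k+1) * coord n y (n-k-1)
            + coord n y (k+1) * coord n (Pi.single (⟨t, ht⟩ : Fin n) (1:ℝ)) (n-k-1))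
          = (if k = n-2 then 2*((n-2).choose k : ℝ)*coord n y (k+2) else 0) := by
        intro k hk
        simp only [Finset.mem_range] at hk
        simp only [coord_single, Fin.val_mk]
        simp only [show (k+2 = t+1) = (k = n-2) from propext (by omega),
            show (k+1 = t+1) = False from eq_false (by omega),
            show (n-k-1 = t+1) = False from eq_false (by omega), if_false]
        split_ifs <;> ring
      rw [Finset.sum_congr rfl step, sum_pick _ _ _ (by omega),
        if_pos hb1, if_neg hb2, Nat.choose_self]
      rw [show n-2+2 = t+1 by omega, show t-1 = n-2 by omega, Nat.choose_self]
      ring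
  · -- t = 0
    have ht0 : t = 0 := by omega
    subst ht0
    have step : ∀ k ∈ Finset.range (n-1),
        ((n-2).choose k : ℝ) * (2 * coord n (Pi.single (⟨0, ht⟩ : Fin n) (1:ℝ)) (k+2) * coord n y (k+2)
          + coord n (Pi.single (⟨0, ht⟩ : Fin n) (1:ℝ)) (k+1) * coord n y (n-k-1)
          + coord n y (k+1) * coord n (Pi.single (⟨0, ht⟩ : Fin n) (1:ℝ)) (n-k-1))
        = (if k = 0 then ((n-2).choose k : ℝ)*coord n y (n-k-1) else 0)
          + (if k = n-2 then ((n-2).choose k : ℝ)*coord n y (k+1) else 0) := by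
      intro k hk
      simp only [Finset.mem_range] at hk
      simp only [coord_single, Fin.val_mk]
      simp only [show (k+2 = 0+1) = False from eq_false (by omega),
          show (k+1 = 0+1) = (k = 0) from propext (by omega),
          show (n-k-1 = 0+1) = (k = n-2) from propext (by omega), if_false]
      split_ifs <;> ring
    rw [Finset.sum_congr rfl step, Finset.sum_add_distrib,
      sum_pick _ _ _ (by omega), sum_pick _ _ _ (by omega),
      if_neg hb1, if_pos (by omega : 0 ≤ n-2), Nat.choose_zero_right, Nat.choose_self]
    rw [show n-0-1 = n-1-0 by omega, show n-2+1 = n-1-0 by omega]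
    ring

open Matrix in
/-- Let `H` be the (symmetric) Hessian matrix of `ψ` and let `v` be the vector with
`i`-th entry `(√2 / 2^{n-1}) C(n-1, i-1)`.  Then `X = v vᵀ - H` is invertible
(it has rank `n`). -/
theorem X_invertible (n : ℕ) (hn : 3 ≤ n) (H : Matrix (Fin n) (Fin n) ℝ)
    (hsymm : H.IsSymm) (hH : ∀ x : Fin n → ℝ, psi n x = (1/2) * (x ⬝ᵥ H *ᵥ x))
    (v : Fin n → ℝ) (hv : ∀ i, v i = Real.sqrt 2 / 2^(n-1) * ((n-1).choose (i : ℕ) : ℝ)) :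
    (Matrix.vecMulVec v v - H).det ≠ 0 ∧ (Matrix.vecMulVec v v - H).rank = n := by
  set X := Matrix.vecMulVec v v - H with hX
  have hc' : ((2:ℝ)^(n-1))⁻¹ ≠ 0 := by positivity
  have hXsymm : Xᵀ = X := by
    rw [hX, Matrix.transpose_sub, hsymm]
    congr 1
    ext i j
    simp [Matrix.vecMulVec_apply, Matrix.transpose_apply, mul_comm]
  -- the quadratic form of X
  have hq : ∀ x : Fin n → ℝ, x ⬝ᵥ X *ᵥ x = 2 * (((2:ℝ)^(n-1))⁻¹ * Qf n x) := by
    intro x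
    have e2 : x ⬝ᵥ H *ᵥ x = 2 * psi n x := by rw [hH x]; ring
    have hpsi : psi n x = (((2:ℝ)^(n-1))⁻¹ *
        ∑ k ∈ Finset.range n, ((n-1).choose k : ℝ) * coord n x (k+1))^2
        - ((2:ℝ)^(n-1))⁻¹ * Qf n x := rfl
    have hvx : v ⬝ᵥ x = Real.sqrt 2 * (((2:ℝ)^(n-1))⁻¹ *
        ∑ k ∈ Finset.range n, ((n-1).choose k : ℝ) * coord n x (k+1)) := by
      have hsum : ∑ k ∈ Finset.range n, ((n-1).choose k : ℝ) * coord n x (k+1)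
          = ∑ i : Fin n, ((n-1).choose (i:ℕ) : ℝ) * x i := by
        rw [← Fin.sum_univ_eq_sum_range (fun k => ((n-1).choose k : ℝ) * coord n x (k+1)) n]
        refine Finset.sum_congr rfl fun i _ => ?_
        rw [coord_lt n x i i.isLt]
      rw [dotProduct, hsum, Finset.mul_sum, Finset.mul_sum]
      refine Finset.sum_congr rfl fun i _ => ?_
      rw [hv i]; ring
    have e1 : x ⬝ᵥ (Matrix.vecMulVec v v) *ᵥ x = (v ⬝ᵥ x)^2 := by
      have h0 : (Matrix.vecMulVec v v) *ᵥ x = fun i => v i * (v ⬝ᵥ x) := by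
        funext i
        simp only [Matrix.mulVec, dotProduct, Matrix.vecMulVec_apply]
        rw [Finset.mul_sum]
        exact Finset.sum_congr rfl fun j _ => by ring
      rw [h0]
      have h1 : x ⬝ᵥ (fun i => v i * (v ⬝ᵥ x)) = (x ⬝ᵥ v) * (v ⬝ᵥ x) := by
        simp only [dotProduct]
        rw [Finset.sum_mul]
        exact Finset.sum_congr rfl fun i _ => by ring
      rw [h1, dotProduct_comm x v, pow_two]
    rw [hX, Matrix.sub_mulVec, dotProduct_sub, e1, e2, hvx, hpsi,
      mul_pow, Real.sq_sqrt (by norm_num : (0:ℝ) ≤ 2)]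
    ring
  -- polarization
  have hbil : ∀ z y : Fin n → ℝ,
      2 * (z ⬝ᵥ X *ᵥ y) = 2 * (((2:ℝ)^(n-1))⁻¹ * Bf n z y) := by
    intro z y
    have hsy : y ⬝ᵥ X *ᵥ z = z ⬝ᵥ X *ᵥ y := by
      calc y ⬝ᵥ X *ᵥ z = (y ᵥ* X) ⬝ᵥ z := Matrix.dotProduct_mulVec _ _ _
        _ = (X *ᵥ y) ⬝ᵥ z := by
            conv_lhs => rw [← hXsymm]
            rw [Matrix.vecMul_transpose]
        _ = z ⬝ᵥ X *ᵥ y := dotProduct_comm _ _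
    have expand : (z+y) ⬝ᵥ X *ᵥ (z+y)
        = z ⬝ᵥ X *ᵥ z + y ⬝ᵥ X *ᵥ y + 2*(z ⬝ᵥ X *ᵥ y) := by
      rw [Matrix.mulVec_add, dotProduct_add, add_dotProduct,
        add_dotProduct, hsy]
      ring
    have h1 := hq (z+y)
    have h2 := hq z
    have h3 := hq y
    rw [expand, Qf_add] at h1
    linear_combination h1 - h2 - h3
  have hdet : X.det ≠ 0 := by
    intro h0
    obtain ⟨y, hy0, hXy⟩ := Matrix.exists_mulVec_eq_zero_iff.2 h0
    have hE : ∀ t, ∀ ht : t < n,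
        (if 1 ≤ t then ((n-2).choose (t-1) : ℝ) else 0) * coord n y (t+1)
        + (if t ≤ n-2 then ((n-2).choose t : ℝ) else 0) * coord n y (n-1-t) = 0 := by
      intro t ht
      have hb := hbil (Pi.single ⟨t, ht⟩ 1) y
      rw [hXy, dotProduct_zero, mul_zero, Bf_single n hn t ht y] at hb
      simpa [mul_eq_zero, hc'] using hb.symm
    have hz : ∀ t, t < n → coord n y (t+1) = 0 := by
      have hzlast : coord n y ((n-1)+1) = 0 := by
        have h := hE (n-1) (by omega)
        rw [if_pos (by omega), if_neg (by omega), show n-1-1 = n-2 by omega,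
          Nat.choose_self] at h
        push_cast at h
        linarith
      have hzn2 : coord n y ((n-2)+1) = 0 := by
        have h := hE 0 (by omega)
        rw [if_neg (by omega), if_pos (by omega), Nat.choose_zero_right,
          show n-1-0 = (n-2)+1 by omega] at h
        push_cast at h
        linarith
      intro t ht
      rcases eq_or_ne t (n-1) with rfl | h1
      · exact hzlast
      rcases eq_or_ne t (n-2) with rfl | h2
      · exact hzn2
      rcases Nat.eq_zero_or_pos t with rfl | htpos
      · -- t = 0 : use the equation at n-2
        have h := hE (n-2) (by omega)
        rw [if_pos (by omega), if_pos (by omega), Nat.choose_self,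
          show n-1-(n-2) = 0+1 by omega, hzn2] at h
        push_cast at h
        linarith
      · -- 1 ≤ t ≤ n-3
        have ht3 : t ≤ n-3 := by omega
        set s := n-2-t with hs
        have h1' := hE t (by omega)
        have h2' := hE s (by omega)
        rw [if_pos (by omega), if_pos (by omega), show n-1-t = s+1 by omega] at h1'
        rw [if_pos (by omega), if_pos (by omega), show n-1-s = t+1 by omega] at h2'
        have e1 : (n-2).choose s = (n-2).choose t := by
          rw [hs]; exact Nat.choose_symm (by omega)
        have e2 : (n-2).choose (s-1) = (n-2).choose (t+1) := by
          rw [show s-1 = n-2-(t+1) by omega]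
          exact Nat.choose_symm (by omega)
        rw [e1, e2] at h2'
        have hlc := lc (n-2) t htpos (by omega)
        have hlcR : ((n-2).choose (t-1) : ℝ) * ((n-2).choose (t+1) : ℝ)
            < (((n-2).choose t : ℝ))^2 := by exact_mod_cast hlc
        have key : ((((n-2).choose (t-1) : ℝ)) * (((n-2).choose (t+1) : ℝ))
            - (((n-2).choose t : ℝ))^2) * coord n y (t+1) = 0 := by
          linear_combination (((n-2).choose (t+1) : ℝ)) * h1'
            - (((n-2).choose t : ℝ)) * h2'
        rcases mul_eq_zero.1 key with h | h
        · linarith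
        · exact h
    apply hy0
    funext i
    have h := hz (i : ℕ) i.isLt
    rw [coord_lt n y (i : ℕ) i.isLt] at h
    simpa using h
  refine ⟨hdet, ?_⟩
  have hu : IsUnit X := (Matrix.isUnit_iff_isUnit_det X).2 (isUnit_iff_ne_zero.2 hdet)
  rw [Matrix.rank_of_isUnit X hu, Fintype.card_fin]
end

section
/- For every n ≥ 6, the real symmetric matrix H_n has at least two strictly positive eigenvalues and at least two strictly negative eigenvalues, counted with multiplicity. -/
theorem sq_lt_pow (c : ℕ) (hc : 4 ≤ c) : c^2 < 2^(c+1) := by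
  induction c, hc using Nat.le_induction with
  | base => norm_num
  | succ c hc ih =>
    have h1 : 2*c+1 ≤ c^2 := by nlinarith
    have h2 : 2^(c+1+1) = 2^(c+1) + 2^(c+1) := by ring
    nlinarith

theorem choose_ineq (n : ℕ) (hn : 6 ≤ n) :
    (n-2).choose ((n-1)/2 - 2) + (n-2).choose ((n-1)/2) < 2 * (n-2).choose ((n-1)/2 - 1) := by
  obtain ⟨k, hk⟩ : ∃ k, (n-1)/2 = k + 2 := ⟨(n-1)/2 - 2, by omega⟩
  rw [hk]
  simp only [Nat.add_sub_cancel, show k + 2 - 1 = k + 1 by omega]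
  rcases Nat.even_or_odd n with he | ho
  · obtain ⟨m, hm⟩ := he
    have hn2 : n - 2 = 2*(k+2) := by omega
    rw [hn2]
    have h1 : (2*(k+2)).choose (k+2) * (k+2) = (2*(k+2)).choose (k+1) * (k+3) := by
      have := Nat.choose_succ_right_eq (2*(k+2)) (k+1)
      rw [this]; congr 1; omega
    have h2 : (2*(k+2)).choose (k+1) * (k+1) = (2*(k+2)).choose k * (k+4) := by
      have := Nat.choose_succ_right_eq (2*(k+2)) k
      rw [this]; congr 1; omega
    have hA : 0 < (2*(k+2)).choose (k+1) := Nat.choose_pos (by omega)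
    set a := (2*(k+2)).choose k with ha
    set A := (2*(k+2)).choose (k+1) with hAa
    set D := (2*(k+2)).choose (k+2) with hD
    by_contra hcon
    push_neg at hcon
    have g : 2*A*((k+2)*(k+4)) ≤ (a+D)*((k+2)*(k+4)) :=
      Nat.mul_le_mul_right _ hcon
    have e1 : D*((k+2)*(k+4)) = A*((k+3)*(k+4)) := by
      calc D*((k+2)*(k+4)) = (D*(k+2))*(k+4) := by ring
      _ = (A*(k+3))*(k+4) := by rw [h1]
      _ = A*((k+3)*(k+4)) := by ring
    have e2 : a*((k+2)*(k+4)) = A*((k+1)*(k+2)) := by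
      calc a*((k+2)*(k+4)) = (a*(k+4))*(k+2) := by ring
      _ = (A*(k+1))*(k+2) := by rw [← h2]
      _ = A*((k+1)*(k+2)) := by ring
    have g2 : 2*A*((k+2)*(k+4)) ≤ A*((k+1)*(k+2)) + A*((k+3)*(k+4)) := by
      calc 2*A*((k+2)*(k+4)) ≤ (a+D)*((k+2)*(k+4)) := g
      _ = a*((k+2)*(k+4)) + D*((k+2)*(k+4)) := by ring
      _ = A*((k+1)*(k+2)) + A*((k+3)*(k+4)) := by rw [e1, e2]
    have lhs : 2*A*((k+2)*(k+4)) = A*(2*k^2+12*k+16) := by ring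
    have rhs : A*((k+1)*(k+2)) + A*((k+3)*(k+4)) = A*(2*k^2+10*k+14) := by ring
    rw [lhs, rhs] at g2
    have := Nat.le_of_mul_le_mul_left (by linarith [g2] : A*(2*k^2+12*k+16) ≤ A*(2*k^2+10*k+14)) hA
    omega
  · obtain ⟨m, hm⟩ := ho
    have hn2 : n - 2 = 2*k + 3 := by omega
    rw [hn2]
    have hsymm : (2*k+3).choose (k+2) = (2*k+3).choose (k+1) := by
      have := Nat.choose_symm (show k+1 ≤ 2*k+3 by omega)
      rw [show 2*k+3-(k+1) = k+2 by omega] at this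
      exact this
    have h2 : (2*k+3).choose (k+1) * (k+1) = (2*k+3).choose k * (k+3) := by
      have := Nat.choose_succ_right_eq (2*k+3) k
      rw [this]; congr 1; omega
    have ha : 0 < (2*k+3).choose k := Nat.choose_pos (by omega)
    have : (2*k+3).choose k < (2*k+3).choose (k+1) := by nlinarith
    omega

open Matrix in
theorem dot_expand (n : ℕ) (H : Matrix (Fin n) (Fin n) ℝ) (hherm : H.IsHermitian) (x : Fin n → ℝ) :
    x ⬝ᵥ H *ᵥ x = ∑ i, hherm.eigenvalues i * ((hherm.eigenvectorBasis i : Fin n → ℝ) ⬝ᵥ x)^2 := by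
  have hsymm : Hᵀ = H := by
    ext i k
    have := congrFun (congrFun hherm i) k
    simpa [Matrix.conjTranspose_apply, Matrix.transpose_apply] using this
  have hinner : ∀ y z : EuclideanSpace ℝ (Fin n), (inner ℝ y z : ℝ) = (y : Fin n → ℝ) ⬝ᵥ z := by
    intro y z
    simp [PiLp.inner_apply, RCLike.inner_apply, dotProduct, mul_comm]
  have key := hherm.eigenvectorBasis.sum_inner_mul_inner
    (WithLp.toLp 2 x : EuclideanSpace ℝ (Fin n)) (WithLp.toLp 2 (H *ᵥ x) : EuclideanSpace ℝ (Fin n))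
  rw [hinner] at key
  simp only [WithLp.ofLp_toLp] at key
  rw [← key]
  refine Finset.sum_congr rfl fun i _ => ?_
  rw [hinner, hinner]
  simp only [WithLp.ofLp_toLp]
  have hmul : H *ᵥ (hherm.eigenvectorBasis i : Fin n → ℝ)
      = hherm.eigenvalues i • (hherm.eigenvectorBasis i : Fin n → ℝ) := by
    simpa [WithLp.equiv] using hherm.mulVec_eigenvectorBasis i
  have h1 : (hherm.eigenvectorBasis i : Fin n → ℝ) ⬝ᵥ (H *ᵥ x)
      = hherm.eigenvalues i * ((hherm.eigenvectorBasis i : Fin n → ℝ) ⬝ᵥ x) := by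
    rw [Matrix.dotProduct_mulVec, ← Matrix.mulVec_transpose, hsymm, hmul,
      smul_dotProduct]
    rfl
  rw [h1, dotProduct_comm x]
  ring

open Matrix in
theorem ker_helper (n : ℕ) (P : Finset (Fin n)) (hP1 : P.card ≤ 1) (cu cv : Fin n → ℝ) :
    ∃ a b : ℝ, ¬(a = 0 ∧ b = 0) ∧ ∀ i ∈ P, a * cu i + b * cv i = 0 := by
  by_cases h0 : ∀ i ∈ P, cu i = 0
  · exact ⟨1, 0, by simp, fun i hi => by simp [h0 i hi]⟩
  · push_neg at h0
    obtain ⟨i0, hi0, hcu⟩ := h0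
    refine ⟨cv i0, -(cu i0), ?_, fun i hi => ?_⟩
    · rintro ⟨-, hb⟩
      exact hcu (neg_eq_zero.mp hb)
    · have : i = i0 := Finset.card_le_one.mp hP1 i hi i0 hi0
      subst this
      ring

open Matrix in
theorem two_le_pos (n : ℕ) (H : Matrix (Fin n) (Fin n) ℝ) (hherm : H.IsHermitian)
    (u v : Fin n → ℝ)
    (hq : ∀ a b : ℝ, ¬(a = 0 ∧ b = 0) → 0 < (a • u + b • v) ⬝ᵥ H *ᵥ (a • u + b • v)) :
    2 ≤ (Finset.univ.filter fun i => 0 < hherm.eigenvalues i).card := by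
  by_contra hlt
  push_neg at hlt
  set P := Finset.univ.filter fun i => 0 < hherm.eigenvalues i with hP
  have hP1 : P.card ≤ 1 := by omega
  obtain ⟨a, b, hab, hker⟩ := ker_helper n P hP1
    (fun i => (hherm.eigenvectorBasis i : Fin n → ℝ) ⬝ᵥ u)
    (fun i => (hherm.eigenvectorBasis i : Fin n → ℝ) ⬝ᵥ v)
  set x := a • u + b • v with hx
  have hxpos := hq a b hab
  have hexp := dot_expand n H hherm x
  have hterm : ∀ i : Fin n, hherm.eigenvalues i * ((hherm.eigenvectorBasis i : Fin n → ℝ) ⬝ᵥ x)^2 ≤ 0 := by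
    intro i
    by_cases hi : 0 < hherm.eigenvalues i
    · have hiP : i ∈ P := by simp [hP, hi]
      have hdot : (hherm.eigenvectorBasis i : Fin n → ℝ) ⬝ᵥ x = 0 := by
        have := hker i hiP
        simpa [hx, dotProduct_add, dotProduct_smul, smul_eq_mul] using this
      simp [hdot]
    · push_neg at hi
      exact mul_nonpos_of_nonpos_of_nonneg hi (sq_nonneg _)
  have hsum : x ⬝ᵥ H *ᵥ x ≤ 0 := by
    rw [hexp]
    exact Finset.sum_nonpos fun i _ => hterm i
  linarith

open Matrix in
theorem two_le_neg (n : ℕ) (H : Matrix (Fin n) (Fin n) ℝ) (hherm : H.IsHermitian)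
    (u v : Fin n → ℝ)
    (hq : ∀ a b : ℝ, ¬(a = 0 ∧ b = 0) → (a • u + b • v) ⬝ᵥ H *ᵥ (a • u + b • v) < 0) :
    2 ≤ (Finset.univ.filter fun i => hherm.eigenvalues i < 0).card := by
  by_contra hlt
  push_neg at hlt
  set P := Finset.univ.filter fun i => hherm.eigenvalues i < 0 with hP
  have hP1 : P.card ≤ 1 := by omega
  obtain ⟨a, b, hab, hker⟩ := ker_helper n P hP1
    (fun i => (hherm.eigenvectorBasis i : Fin n → ℝ) ⬝ᵥ u)
    (fun i => (hherm.eigenvectorBasis i : Fin n → ℝ) ⬝ᵥ v)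
  set x := a • u + b • v with hx
  have hxneg := hq a b hab
  have hexp := dot_expand n H hherm x
  have hterm : ∀ i : Fin n, 0 ≤ hherm.eigenvalues i * ((hherm.eigenvectorBasis i : Fin n → ℝ) ⬝ᵥ x)^2 := by
    intro i
    by_cases hi : hherm.eigenvalues i < 0
    · have hiP : i ∈ P := by simp [hP, hi]
      have hdot : (hherm.eigenvectorBasis i : Fin n → ℝ) ⬝ᵥ x = 0 := by
        have := hker i hiP
        simpa [hx, dotProduct_add, dotProduct_smul, smul_eq_mul] using this
      simp [hdot]
    · push_neg at hi
      exact mul_nonneg hi (sq_nonneg _)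
  have hsum : 0 ≤ x ⬝ᵥ H *ᵥ x := by
    rw [hexp]
    exact Finset.sum_nonneg fun i _ => hterm i
  linarith

theorem coord_eq {n t : ℕ} (p : Fin n → ℝ) (h1 : 1 ≤ t) (h2 : t ≤ n) :
    coord n p t = p ⟨t-1, by omega⟩ := by
  rw [coord, dif_pos ⟨h1, h2⟩]

theorem coord_succ {n k : ℕ} (p : Fin n → ℝ) (hk : k < n) :
    coord n p (k+1) = p ⟨k, hk⟩ := by
  rw [coord, dif_pos ⟨by omega, by omega⟩]
  congr 1

theorem coord_gen {n t : ℕ} (p : Fin n → ℝ) (h1 : 1 ≤ t) (h2 : t ≤ n) {m : ℕ}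
    (hm : m = t - 1) (hmn : m < n) : coord n p t = p ⟨m, hmn⟩ := by
  subst hm
  rw [coord, dif_pos ⟨h1, h2⟩]

theorem sum_two {g : ℕ → ℝ} {N i1 i2 : ℕ} (h12 : i1 < i2) (h2 : i2 < N)
    (hg : ∀ k, k < N → k ≠ i1 → k ≠ i2 → g k = 0) :
    ∑ k ∈ Finset.range N, g k = g i1 + g i2 := by
  have hsub : ({i1, i2} : Finset ℕ) ⊆ Finset.range N := by
    intro x hx
    simp only [Finset.mem_insert, Finset.mem_singleton] at hx
    rcases hx with h | h <;> subst h <;> simp only [Finset.mem_range] <;> omega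
  rw [← Finset.sum_subset hsub (fun x hx hnx => by
    simp only [Finset.mem_insert, Finset.mem_singleton, not_or] at hnx
    exact hg x (Finset.mem_range.mp hx) hnx.1 hnx.2)]
  rw [Finset.sum_pair h12.ne]

theorem sum_three {g : ℕ → ℝ} {N i1 i2 i3 : ℕ} (h12 : i1 < i2) (h23 : i2 < i3) (h3 : i3 < N)
    (hg : ∀ k, k < N → k ≠ i1 → k ≠ i2 → k ≠ i3 → g k = 0) :
    ∑ k ∈ Finset.range N, g k = g i1 + g i2 + g i3 := by
  have hsub : ({i1, i2, i3} : Finset ℕ) ⊆ Finset.range N := by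
    intro x hx
    simp only [Finset.mem_insert, Finset.mem_singleton] at hx
    rcases hx with h | h | h <;> subst h <;> simp only [Finset.mem_range] <;> omega
  rw [← Finset.sum_subset hsub (fun x hx hnx => by
    simp only [Finset.mem_insert, Finset.mem_singleton, not_or] at hnx
    exact hg x (Finset.mem_range.mp hx) hnx.1 hnx.2.1 hnx.2.2)]
  rw [Finset.sum_insert (by simp only [Finset.mem_insert, Finset.mem_singleton]; omega),
    Finset.sum_pair h23.ne, add_assoc]

noncomputable def uPos (n : ℕ) : Fin n → ℝ := fun i => if (i:ℕ) = 0 then 1 else 0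
noncomputable def vPos (n : ℕ) : Fin n → ℝ := fun i =>
  if (i:ℕ) = (n-1)/2 - 1 then 1 else if (i:ℕ) = n - (n-1)/2 - 1 then -1 else 0

theorem psi_pos (n : ℕ) (hn : 6 ≤ n) (a b : ℝ) (hab : ¬(a = 0 ∧ b = 0)) :
    0 < psi n (a • uPos n + b • vPos n) := by
  have hj2 : 2 ≤ (n-1)/2 := by omega
  have h2j : 2*((n-1)/2) < n := by omega
  set j := (n-1)/2 with hj
  set x := a • uPos n + b • vPos n with hxdef
  have hx0 : ∀ hk : (0:ℕ) < n, x ⟨0, hk⟩ = a := by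
    intro hk
    simp only [hxdef, Pi.add_apply, Pi.smul_apply, uPos, vPos, smul_eq_mul, ← hj, if_true]
    rw [if_neg (by omega), if_neg (by omega)]
    ring
  have hxj : ∀ hk : j-1 < n, x ⟨j-1, hk⟩ = b := by
    intro hk
    simp only [hxdef, Pi.add_apply, Pi.smul_apply, uPos, vPos, smul_eq_mul, ← hj, if_true]
    rw [if_neg (by omega)]
    ring
  have hxn : ∀ hk : n-j-1 < n, x ⟨n-j-1, hk⟩ = -b := by
    intro hk
    simp only [hxdef, Pi.add_apply, Pi.smul_apply, uPos, vPos, smul_eq_mul, ← hj, if_true]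
    rw [if_neg (by omega), if_neg (by omega)]
    ring
  have hxz : ∀ (k : ℕ) (hk : k < n), k ≠ 0 → k ≠ j-1 → k ≠ n-j-1 → x ⟨k, hk⟩ = 0 := by
    intro k hk h1 h2 h3
    simp only [hxdef, Pi.add_apply, Pi.smul_apply, uPos, vPos, smul_eq_mul, ← hj]
    rw [if_neg (by omega), if_neg (by omega), if_neg (by omega)]
    ring
  have c1 : coord n x (0+1) = a := by
    rw [coord_succ x (show (0:ℕ) < n by omega)]; exact hx0 _
  have c2 : coord n x ((j-1)+1) = b := by
    rw [coord_succ x (show j-1 < n by omega)]; exact hxj _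
  have c3 : coord n x ((n-j-1)+1) = -b := by
    rw [coord_succ x (show n-j-1 < n by omega)]; exact hxn _
  set t : ℝ := ((2:ℝ)^(n-1))⁻¹ with htdef
  have ht : 0 < t := by positivity
  have hS1 : (∑ k ∈ Finset.range n, ((n-1).choose k : ℝ) * coord n x (k+1))
      = a + (((n-1).choose (j-1) : ℝ) - ((n-1).choose (n-j-1) : ℝ)) * b := by
    rw [sum_three (i1 := 0) (i2 := j-1) (i3 := n-j-1) (by omega) (by omega) (by omega)
      (fun k hk h1 h2 h3 => by
        rw [coord_succ x hk, hxz k hk h1 h2 h3, mul_zero])]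
    simp only [c1, c2, c3, Nat.choose_zero_right, Nat.cast_one]
    ring
  have hD : (∑ k ∈ Finset.range (n-1), ((n-2).choose k : ℝ) * (coord n x (k+2))^2)
      = ((n-2).choose (j-2) : ℝ) * b^2 + ((n-2).choose (n-j-2) : ℝ) * b^2 := by
    have d1 : coord n x ((j-2)+2) = b := by
      rw [coord_gen x (by omega) (by omega) (show j-1 = (j-2)+2-1 by omega) (by omega)]
      exact hxj _
    have d2 : coord n x ((n-j-2)+2) = -b := by
      rw [coord_gen x (by omega) (by omega) (show n-j-1 = (n-j-2)+2-1 by omega) (by omega)]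
      exact hxn _
    rw [sum_two (i1 := j-2) (i2 := n-j-2) (by omega) (by omega)
      (fun k hk h1 h2 => by
        rw [coord_gen x (by omega) (by omega) (show k+1 = k+2-1 by omega) (by omega),
          hxz (k+1) (by omega) (by omega) (by omega) (by omega)]
        simp)]
    simp only [d1, d2]
    ring
  have hX : (∑ k ∈ Finset.range (n-1),
        ((n-2).choose k : ℝ) * (coord n x (k+1) * coord n x (n-k-1)))
      = -(((n-2).choose (j-1) : ℝ) + ((n-2).choose (n-j-1) : ℝ)) * b^2 := by
    have e1 : coord n x (n-(j-1)-1) = -b := by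
      rw [coord_gen x (by omega) (by omega) (show n-j-1 = n-(j-1)-1-1 by omega) (by omega)]
      exact hxn _
    have e2 : coord n x (n-(n-j-1)-1) = b := by
      rw [coord_gen x (by omega) (by omega) (show j-1 = n-(n-j-1)-1-1 by omega) (by omega)]
      exact hxj _
    rw [sum_two (i1 := j-1) (i2 := n-j-1) (by omega) (by omega)
      (fun k hk h1 h2 => by
        by_cases hk0 : k = 0
        · subst hk0
          rw [coord_gen x (t := n-0-1) (by omega) (by omega) (show n-2 = n-0-1-1 by omega)
              (by omega),
            hxz (n-2) (by omega) (by omega) (by omega) (by omega)]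
          simp
        · rw [coord_succ x (by omega : k < n),
            hxz k (by omega) hk0 h1 h2]
          simp)]
    simp only [c2, c3, e1, e2]
    ring
  have hsplit : (∑ k ∈ Finset.range (n-1), ((n-2).choose k : ℝ) *
        ((coord n x (k+2))^2 + coord n x (k+1) * coord n x (n-k-1)))
      = (∑ k ∈ Finset.range (n-1), ((n-2).choose k : ℝ) * (coord n x (k+2))^2)
        + (∑ k ∈ Finset.range (n-1),
            ((n-2).choose k : ℝ) * (coord n x (k+1) * coord n x (n-k-1))) := by
    rw [← Finset.sum_add_distrib]
    exact Finset.sum_congr rfl fun k _ => by ring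
  set K : ℝ := (((n-2).choose (j-1) : ℝ) + ((n-2).choose (n-j-1) : ℝ))
      - (((n-2).choose (j-2) : ℝ) + ((n-2).choose (n-j-2) : ℝ)) with hKdef
  have hpsi : psi n x
      = (t * (a + (((n-1).choose (j-1) : ℝ) - ((n-1).choose (n-j-1) : ℝ)) * b))^2
        + t * K * b^2 := by
    rw [psi, hS1, hsplit, hD, hX, hKdef, ← htdef]
    ring
  have hsym1 : (n-2).choose (n-j-1) = (n-2).choose (j-1) := by
    have h := Nat.choose_symm (show j-1 ≤ n-2 by omega)
    rw [show n-2-(j-1) = n-j-1 by omega] at h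
    exact h
  have hsym2 : (n-2).choose (n-j-2) = (n-2).choose j := by
    have h := Nat.choose_symm (show j ≤ n-2 by omega)
    rw [show n-2-j = n-j-2 by omega] at h
    exact h
  have hKnat : (n-2).choose (j-2) + (n-2).choose (n-j-2)
      < (n-2).choose (j-1) + (n-2).choose (n-j-1) := by
    rw [hsym1, hsym2]
    have h := choose_ineq n hn
    rw [← hj] at h
    omega
  have hK : 0 < K := by
    rw [hKdef]
    have hc : (((n-2).choose (j-2) + (n-2).choose (n-j-2) : ℕ) : ℝ)
        < (((n-2).choose (j-1) + (n-2).choose (n-j-1) : ℕ) : ℝ) := by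
      exact_mod_cast hKnat
    push_cast at hc
    linarith
  rw [hpsi]
  by_cases hb : b = 0
  · have ha : a ≠ 0 := fun h => hab ⟨h, hb⟩
    subst hb
    have h1 : t * (a + (((n-1).choose (j-1) : ℝ) - ((n-1).choose (n-j-1) : ℝ)) * 0) = t * a := by
      ring
    rw [h1]
    have h2 : t * a ≠ 0 := mul_ne_zero ht.ne' ha
    have h3 := pow_two_pos_of_ne_zero h2
    nlinarith
  · have h1 : 0 < t * K * b^2 := mul_pos (mul_pos ht hK) (pow_two_pos_of_ne_zero hb)
    have h2 := sq_nonneg (t * (a + (((n-1).choose (j-1) : ℝ) - ((n-1).choose (n-j-1) : ℝ)) * b))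
    linarith

noncomputable def uNeg (n : ℕ) : Fin n → ℝ := fun i => if (i:ℕ) = n-1 then 1 else 0
noncomputable def vNeg (n : ℕ) : Fin n → ℝ := fun i =>
  if (i:ℕ) = 0 then 1 else if (i:ℕ) = n-2 then -1 else 0

theorem psi_neg (n : ℕ) (hn : 6 ≤ n) (a b : ℝ) (hab : ¬(a = 0 ∧ b = 0)) :
    psi n (a • uNeg n + b • vNeg n) < 0 := by
  set x := a • uNeg n + b • vNeg n with hxdef
  have hx0 : ∀ hk : (0:ℕ) < n, x ⟨0, hk⟩ = b := by
    intro hk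
    simp only [hxdef, Pi.add_apply, Pi.smul_apply, uNeg, vNeg, smul_eq_mul, if_true]
    rw [if_neg (by omega)]
    ring
  have hx2 : ∀ hk : n-2 < n, x ⟨n-2, hk⟩ = -b := by
    intro hk
    simp only [hxdef, Pi.add_apply, Pi.smul_apply, uNeg, vNeg, smul_eq_mul, if_true]
    rw [if_neg (by omega), if_neg (by omega)]
    ring
  have hx1 : ∀ hk : n-1 < n, x ⟨n-1, hk⟩ = a := by
    intro hk
    simp only [hxdef, Pi.add_apply, Pi.smul_apply, uNeg, vNeg, smul_eq_mul, if_true]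
    rw [if_neg (by omega), if_neg (by omega)]
    ring
  have hxz : ∀ (k : ℕ) (hk : k < n), k ≠ 0 → k ≠ n-2 → k ≠ n-1 → x ⟨k, hk⟩ = 0 := by
    intro k hk h1 h2 h3
    simp only [hxdef, Pi.add_apply, Pi.smul_apply, uNeg, vNeg, smul_eq_mul]
    rw [if_neg (by omega), if_neg (by omega), if_neg (by omega)]
    ring
  have c1 : coord n x (0+1) = b := by
    rw [coord_succ x (show (0:ℕ) < n by omega)]; exact hx0 _
  have c2 : coord n x ((n-2)+1) = -b := by
    rw [coord_gen x (by omega) (by omega) (show n-2 = (n-2)+1-1 by omega) (by omega)]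
    exact hx2 _
  have c3 : coord n x ((n-1)+1) = a := by
    rw [coord_gen x (by omega) (by omega) (show n-1 = (n-1)+1-1 by omega) (by omega)]
    exact hx1 _
  set t : ℝ := ((2:ℝ)^(n-1))⁻¹ with htdef
  have ht : 0 < t := by positivity
  set c : ℝ := ((n-2 : ℕ) : ℝ) with hcdef
  have hcast : ((n-1 : ℕ) : ℝ) = c + 1 := by
    rw [hcdef, show n-1 = (n-2)+1 by omega]
    push_cast
    ring
  have hc4 : (4:ℝ) ≤ c := by
    rw [hcdef]
    exact_mod_cast (show (4:ℕ) ≤ n - 2 by omega)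
  have hS1 : (∑ k ∈ Finset.range n, ((n-1).choose k : ℝ) * coord n x (k+1))
      = a - c * b := by
    rw [sum_three (i1 := 0) (i2 := n-2) (i3 := n-1) (by omega) (by omega) (by omega)
      (fun k hk h1 h2 h3 => by
        rw [coord_succ x hk, hxz k hk h1 h2 h3, mul_zero])]
    have hch : (n-1).choose (n-2) = n-1 := by
      rw [show n-2 = n-1-1 by omega, Nat.choose_symm (by omega), Nat.choose_one_right]
    simp only [c1, c2, c3, Nat.choose_zero_right, Nat.cast_one, Nat.choose_self, hch, hcast]
    ring
  have hD : (∑ k ∈ Finset.range (n-1), ((n-2).choose k : ℝ) * (coord n x (k+2))^2)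
      = c * b^2 + a^2 := by
    have d1 : coord n x ((n-3)+2) = -b := by
      rw [coord_gen x (by omega) (by omega) (show n-2 = (n-3)+2-1 by omega) (by omega)]
      exact hx2 _
    have d2 : coord n x ((n-2)+2) = a := by
      rw [coord_gen x (by omega) (by omega) (show n-1 = (n-2)+2-1 by omega) (by omega)]
      exact hx1 _
    rw [sum_two (i1 := n-3) (i2 := n-2) (by omega) (by omega)
      (fun k hk h1 h2 => by
        rw [coord_gen x (by omega) (by omega) (show k+1 = k+2-1 by omega) (by omega),
          hxz (k+1) (by omega) (by omega) (by omega) (by omega)]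
        simp)]
    have hch : (n-2).choose (n-3) = n-2 := by
      rw [show n-3 = n-2-1 by omega, Nat.choose_symm (by omega), Nat.choose_one_right]
    simp only [d1, d2, Nat.choose_self, Nat.cast_one, hch, ← hcdef]
    ring
  have hX : (∑ k ∈ Finset.range (n-1),
        ((n-2).choose k : ℝ) * (coord n x (k+1) * coord n x (n-k-1)))
      = -2 * b^2 := by
    have e1 : coord n x (n-0-1) = -b := by
      rw [coord_gen x (by omega) (by omega) (show n-2 = n-0-1-1 by omega) (by omega)]
      exact hx2 _
    have e2 : coord n x (n-(n-2)-1) = b := by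
      rw [coord_gen x (by omega) (by omega) (show 0 = n-(n-2)-1-1 by omega) (by omega)]
      exact hx0 _
    rw [sum_two (i1 := 0) (i2 := n-2) (by omega) (by omega)
      (fun k hk h1 h2 => by
        rw [coord_succ x (by omega : k < n), hxz k (by omega) h1 h2 (by omega)]
        simp)]
    simp only [c1, c2, e1, e2, Nat.choose_zero_right, Nat.cast_one, Nat.choose_self]
    ring
  have hsplit : (∑ k ∈ Finset.range (n-1), ((n-2).choose k : ℝ) *
        ((coord n x (k+2))^2 + coord n x (k+1) * coord n x (n-k-1)))
      = (∑ k ∈ Finset.range (n-1), ((n-2).choose k : ℝ) * (coord n x (k+2))^2)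
        + (∑ k ∈ Finset.range (n-1),
            ((n-2).choose k : ℝ) * (coord n x (k+1) * coord n x (n-k-1))) := by
    rw [← Finset.sum_add_distrib]
    exact Finset.sum_congr rfl fun k _ => by ring
  have hpsi : psi n x = (t * (a - c*b))^2 - t * (a^2 + (c - 2) * b^2) := by
    rw [psi, hS1, hsplit, hD, hX, ← htdef]
    ring
  -- key inequalities
  have h2pow : (0:ℝ) < (2:ℝ)^(n-1) := by positivity
  have hta : t * c^2 < 1 := by
    have hnat : (n-2)^2 < 2^(n-1) := by
      have := sq_lt_pow (n-2) (by omega)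
      rwa [show (n-2)+1 = n-1 by omega] at this
    have hreal : c^2 < (2:ℝ)^(n-1) := by
      rw [hcdef]
      exact_mod_cast hnat
    rw [htdef, inv_mul_lt_iff₀ h2pow]
    linarith
  have h2t : 2 * t < 1 := by
    have hnat : (2:ℕ) < 2^(n-1) := by
      calc (2:ℕ) = 2^1 := by norm_num
      _ < 2^(n-1) := Nat.pow_lt_pow_right (by norm_num) (by omega)
    have hreal : (2:ℝ) < (2:ℝ)^(n-1) := by exact_mod_cast hnat
    rw [htdef]
    rw [show (2:ℝ) * ((2:ℝ)^(n-1))⁻¹ = ((2:ℝ)^(n-1))⁻¹ * 2 by ring, inv_mul_lt_iff₀ h2pow]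
    linarith
  have hco1 : 0 < 1 - 2*t := by linarith
  have hco2 : 0 < c - 2 - 2*(t*c^2) := by linarith
  have hpos : 0 < (1-2*t)*a^2 + (c-2-2*(t*c^2))*b^2 := by
    rcases (show a ≠ 0 ∨ b ≠ 0 by tauto) with ha | hb
    · have h1 := pow_two_pos_of_ne_zero ha
      nlinarith [sq_nonneg b]
    · have h1 := pow_two_pos_of_ne_zero hb
      nlinarith [sq_nonneg a]
  have hexp : (a - c*b)^2 ≤ 2*a^2 + 2*c^2*b^2 := by nlinarith [sq_nonneg (a + c*b)]
  have h5 : t*(a-c*b)^2 ≤ t*(2*a^2+2*c^2*b^2) := mul_le_mul_of_nonneg_left hexp ht.le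
  have key : t*(a-c*b)^2 < a^2 + (c-2)*b^2 := by linarith [h5, hpos]
  have h6 : t*(t*(a-c*b)^2) < t*(a^2+(c-2)*b^2) := mul_lt_mul_of_pos_left key ht
  rw [hpsi]
  linarith [h6]

open Matrix in
/-- For `n ≥ 6`, the symmetric Hessian matrix `H` of `ψ` has at least two strictly
positive and at least two strictly negative eigenvalues, counted with multiplicity. -/
theorem hessian_eigenvalues (n : ℕ) (hn : 6 ≤ n) (H : Matrix (Fin n) (Fin n) ℝ)
    (hherm : H.IsHermitian) (hH : ∀ x : Fin n → ℝ, psi n x = (1/2) * (x ⬝ᵥ H *ᵥ x)) :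
    2 ≤ (Finset.univ.filter fun i => 0 < hherm.eigenvalues i).card ∧
    2 ≤ (Finset.univ.filter fun i => hherm.eigenvalues i < 0).card := by
  constructor
  · apply two_le_pos n H hherm (uPos n) (vPos n)
    intro a b hab
    have h1 := psi_pos n hn a b hab
    have h2 := hH (a • uPos n + b • vPos n)
    linarith
  · apply two_le_neg n H hherm (uNeg n) (vNeg n)
    intro a b hab
    have h1 := psi_neg n hn a b hab
    have h2 := hH (a • uNeg n + b • vNeg n)
    linarith
end
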